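/- arXiv:1911.04778 — 8 statements merged into one kernel-verified Lean document; each statement's English description precedes it below -/
import Mathlib

section
/- Let [X,d,m] be a metric random walk space with invariant reversible measure ν, Ω ⊂ X with ν(Ω_m) < ∞, and a_p a Leray–Lions kernel satisfying the antisymmetry a_p(x,y,r) = -a_p(y,x,-r). Let j ∈ {1,2}, Q₁ = Ω_m × Ω_m, Q₂ = (Ω_m × Ω_m) \ (∂_mΩ × ∂_mΩ). If u is ν-measurable with (x,y) ↦ a_p(x,y,u(y)-u(x)) in L^q(Q_j, ν⊗m_x) and w ∈ L^{q'}(Ω_m, ν), then -∫_Ω div_m a_p u(x) w(x) dν(x) + ∫_{∂_mΩ} N_j^{a_p} u(x) w(x) dν(x) = (1/2) ∫_{Q_j} a_p(x,y,u(y)-u(x))(w(y)-w(x)) d(ν⊗m_x)(x,y). -/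
open MeasureTheory ProbabilityTheory ENNReal

/-- The `m`-boundary of `Ω`. -/
def mBoundary {X : Type*} [MeasurableSpace X] (κ : Kernel X X) (Ω : Set X) : Set X :=
  {x | x ∉ Ω ∧ 0 < κ x Ω}

/-- The `m`-closure of `Ω`. -/
def mClosure {X : Type*} [MeasurableSpace X] (κ : Kernel X X) (Ω : Set X) : Set X :=
  Ω ∪ mBoundary κ Ω

/-- `Q_j`: for `j = 1` (encoded `true`) the set `Ω_m × Ω_m`; for `j = 2` (encoded `false`)
the set `(Ω_m × Ω_m) \ (∂_mΩ × ∂_mΩ)`. -/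
def Qset {X : Type*} [MeasurableSpace X] (κ : Kernel X X) (Ω : Set X) (j : Bool) :
    Set (X × X) :=
  if j then (mClosure κ Ω) ×ˢ (mClosure κ Ω)
  else ((mClosure κ Ω) ×ˢ (mClosure κ Ω)) \ ((mBoundary κ Ω) ×ˢ (mBoundary κ Ω))

/-- Domain of integration of the Neumann boundary operator `N_j`: `Ω_m` for `j = 1`
(Gunzburger–Lehoucq), `Ω` for `j = 2` (Dipierro–Ros-Oton–Valdinoci). -/
def Dset {X : Type*} [MeasurableSpace X] (κ : Kernel X X) (Ω : Set X) (j : Bool) : Set X :=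
  if j then mClosure κ Ω else Ω

/-- Integration by parts formula for the nonlocal Leray–Lions operator:
`-∫_Ω div_m a_p u · w dν + ∫_{∂_mΩ} N_j^{a_p} u · w dν
  = (1/2) ∫_{Q_j} a_p(x,y,u(y)-u(x)) (w(y)-w(x)) d(ν ⊗ₘ κ)`. -/
theorem integration_by_parts_leray_lions
    {X : Type*} [MeasurableSpace X]
    (κ : Kernel X X) [IsMarkovKernel κ]
    (ν : Measure X) [SigmaFinite ν]
    (hrev : (ν ⊗ₘ κ).map Prod.swap = ν ⊗ₘ κ)
    (Ω : Set X) (hΩ : MeasurableSet Ω)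
    (hfin : ν (mClosure κ Ω) < ⊤)
    (a : X → X → ℝ → ℝ)
    (ham : Measurable (fun z : (X × X) × ℝ => a z.1.1 z.1.2 z.2))
    (hanti : ∀ x y : X, ∀ r : ℝ, a x y r = - a y x (-r))
    (q q' : ℝ≥0∞) (hq : q.HolderConjugate q')
    (j : Bool)
    (u : X → ℝ) (hum : Measurable u)
    (hker : MemLp (fun z : X × X => a z.1 z.2 (u z.2 - u z.1)) q
      ((ν ⊗ₘ κ).restrict (Qset κ Ω j)))
    (w : X → ℝ) (hwm : Measurable w)
    (hwL : MemLp w q' (ν.restrict (mClosure κ Ω))) :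
    - ∫ x in Ω, (∫ y in mClosure κ Ω, a x y (u y - u x) ∂(κ x)) * w x ∂ν
      + ∫ x in mBoundary κ Ω,
          (- ∫ y in Dset κ Ω j, a x y (u y - u x) ∂(κ x)) * w x ∂ν
      = (1/2) * ∫ z in Qset κ Ω j,
          a z.1 z.2 (u z.2 - u z.1) * (w z.2 - w z.1) ∂(ν ⊗ₘ κ) := by
  classical
  set F : X × X → ℝ := fun z => a z.1 z.2 (u z.2 - u z.1) with hFdef
  set μ : Measure (X × X) := ν ⊗ₘ κ with hμdef
  set Q : Set (X × X) := Qset κ Ω j with hQdef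
  set Ωm : Set X := mClosure κ Ω with hΩmdef
  set B : Set X := mBoundary κ Ω with hBdef
  set D : Set X := Dset κ Ω j with hDdef
  -- measurability basics
  have hBmeas : MeasurableSet B := by
    have h1 : Measurable (fun x => κ x Ω) := Kernel.measurable_coe κ hΩ
    have : B = Ωᶜ ∩ (fun x => κ x Ω) ⁻¹' (Set.Ioi 0) := by
      ext x; simp [hBdef, mBoundary, and_comm]
    rw [this]
    exact hΩ.compl.inter (h1 measurableSet_Ioi)
  have hΩmmeas : MeasurableSet Ωm := hΩ.union hBmeas
  have hDmeas : MeasurableSet D := by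
    cases j <;> simp [hDdef, Dset] <;> first | exact hΩ | exact hΩmmeas
  have hQmeas : MeasurableSet Q := by
    cases j <;> simp [hQdef, Qset]
    · exact (hΩmmeas.prod hΩmmeas).diff (hBmeas.prod hBmeas)
    · exact hΩmmeas.prod hΩmmeas
  have hFm : Measurable F := by
    have : F = (fun z : (X × X) × ℝ => a z.1.1 z.1.2 z.2) ∘
        (fun z : X × X => (z, u z.2 - u z.1)) := rfl
    rw [this]
    exact ham.comp (measurable_id.prodMk
      ((hum.comp measurable_snd).sub (hum.comp measurable_fst)))
  -- decomposition of Q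
  have hBΩ : ∀ x, x ∈ B → x ∉ Ω := fun x hx => hx.1
  have hQdecomp : Q = (Ω ×ˢ Ωm) ∪ (B ×ˢ D) := by
    cases j <;>
      · ext ⟨x, y⟩
        simp only [hQdef, hΩmdef, hBdef, hDdef, Qset, Dset, mClosure, Set.mem_union,
          Set.mem_prod, Set.mem_diff, if_true, if_false, Bool.false_eq_true]
        constructor
        · intro h
          by_cases hx : x ∈ Ω <;> tauto
        · intro h
          rcases h with h | h
          · tauto
          · have := hBΩ x h.1; tauto
  have hdisj : Disjoint (Ω ×ˢ Ωm) (B ×ˢ D) := by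
    rw [Set.disjoint_left]
    rintro ⟨x, y⟩ h1 h2
    exact hBΩ x h2.1 h1.1
  have hQsub1 : Ω ×ˢ Ωm ⊆ Q := by rw [hQdecomp]; exact Set.subset_union_left
  have hQsub2 : B ×ˢ D ⊆ Q := by rw [hQdecomp]; exact Set.subset_union_right
  -- swap invariance of Q
  have hQswap : Prod.swap ⁻¹' Q = Q := by
    cases j <;>
      · ext ⟨x, y⟩
        simp only [hQdef, Qset, Set.mem_preimage, Set.mem_prod, Set.mem_diff, Prod.swap_prod_mk,
          if_true, if_false, Bool.false_eq_true, Set.mem_union]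
        tauto
  have hswapinv : (μ.restrict Q).map Prod.swap = μ.restrict Q := by
    have h1 : (μ.map Prod.swap).restrict Q = (μ.restrict (Prod.swap ⁻¹' Q)).map Prod.swap :=
      Measure.restrict_map measurable_swap hQmeas
    rw [hQswap] at h1
    rw [← h1, hμdef, hrev]
  -- marginals
  have hfst : μ.map Prod.fst = ν := Measure.fst_compProd ν κ
  have hsnd : μ.map Prod.snd = ν := by
    have h1 : (μ.map Prod.swap).map Prod.fst = μ.map Prod.snd := by
      rw [Measure.map_map measurable_fst measurable_swap]; rfl
    rw [← h1, hrev, hfst]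
  -- MemLp of w composed with projections, on μ.restrict Q
  have key : ∀ g : X × X → X, Measurable g → μ.map g = ν → Q ⊆ g ⁻¹' Ωm →
      MemLp (fun z => w (g z)) q' (μ.restrict Q) := by
    intro g hg hmapg hsub
    have h1 : (μ.restrict (g ⁻¹' Ωm)).map g = ν.restrict Ωm := by
      rw [← Measure.restrict_map hg hΩmmeas, hmapg]
    have h2 : MemLp w q' ((μ.restrict (g ⁻¹' Ωm)).map g) := by rw [h1]; exact hwL
    have h3 : MemLp (w ∘ g) q' (μ.restrict (g ⁻¹' Ωm)) :=
      (memLp_map_measure_iff hwm.aestronglyMeasurable hg.aemeasurable).mp h2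
    exact h3.mono_measure (Measure.restrict_mono hsub le_rfl)
  have hQsubfst : Q ⊆ Prod.fst ⁻¹' Ωm := by
    rw [hQdecomp]
    rintro ⟨x, y⟩ (h | h)
    · exact Set.mem_union_left _ h.1
    · exact Set.mem_union_right _ h.1
  have hQsubsnd : Q ⊆ Prod.snd ⁻¹' Ωm := by
    rw [hQdecomp]
    rintro ⟨x, y⟩ (h | h)
    · exact h.2
    · cases j <;> simp [hDdef, Dset] at h
      · exact Set.mem_union_left _ h.2
      · exact h.2
  have hw1 : MemLp (fun z : X × X => w z.1) q' (μ.restrict Q) :=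
    key Prod.fst measurable_fst hfst hQsubfst
  have hw2 : MemLp (fun z : X × X => w z.2) q' (μ.restrict Q) :=
    key Prod.snd measurable_snd hsnd hQsubsnd
  -- Hölder: integrability of the products
  have hpqr : (1 : ℝ≥0∞) / 1 = 1 / q' + 1 / q := by
    simp only [one_div, inv_one]
    rw [add_comm]
    exact hq.inv_add_inv_eq_one.symm
  have hfw1 : IntegrableOn (fun z : X × X => F z * w z.1) Q μ := by
    have := memLp_one_iff_integrable.mp (hker.smul hw1 (hpqr := hq.symm))
    simpa [IntegrableOn, Pi.smul_apply', smul_eq_mul, Pi.mul_def, mul_comm] using this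
  have hfw2 : IntegrableOn (fun z : X × X => F z * w z.2) Q μ := by
    have := memLp_one_iff_integrable.mp (hker.smul hw2 (hpqr := hq.symm))
    simpa [IntegrableOn, Pi.smul_apply', smul_eq_mul, Pi.mul_def, mul_comm] using this
  set I : ℝ := ∫ z in Q, F z * w z.1 ∂μ with hIdef
  -- antisymmetry of F
  have hFswap : ∀ z : X × X, F (Prod.swap z) = - F z := by
    rintro ⟨x, y⟩
    simp only [hFdef, Prod.swap_prod_mk]
    rw [hanti y x (u x - u y), neg_sub]
  -- the swapped integral
  have hswap_int : ∫ z in Q, F z * w z.2 ∂μ = - I := by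
    have h1 : ∫ z in Q, F z * w z.2 ∂μ
        = ∫ z, F (Prod.swap z) * w (Prod.swap z).2 ∂(μ.restrict Q) := by
      conv_lhs => rw [← hswapinv]
      exact integral_map (f := fun z : X × X => F z * w z.2) measurable_swap.aemeasurable
        (hFm.mul (hwm.comp measurable_snd)).aestronglyMeasurable
    rw [h1, hIdef]
    rw [← integral_neg]
    congr 1
    funext z
    rw [hFswap z]
    simp [Prod.swap]
  -- right-hand side
  have hRHS : ∫ z in Q, F z * (w z.2 - w z.1) ∂μ = - I - I := by
    have h1 : ∀ z : X × X, F z * (w z.2 - w z.1) = F z * w z.2 - F z * w z.1 := by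
      intro z; ring
    simp_rw [h1]
    rw [integral_sub hfw2 hfw1, hswap_int, hIdef]
  -- left-hand side, first term
  have e1 : ∫ x in Ω, (∫ y in Ωm, F (x, y) ∂(κ x)) * w x ∂ν
      = ∫ z in Ω ×ˢ Ωm, F z * w z.1 ∂μ := by
    rw [Measure.setIntegral_compProd hΩ hΩmmeas (hfw1.mono_set hQsub1)]
    refine setIntegral_congr_fun hΩ fun x _ => ?_
    exact (integral_mul_const (w x) fun y => F (x, y)).symm
  have e2 : ∫ x in B, (∫ y in D, F (x, y) ∂(κ x)) * w x ∂ν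
      = ∫ z in B ×ˢ D, F z * w z.1 ∂μ := by
    rw [Measure.setIntegral_compProd hBmeas hDmeas (hfw1.mono_set hQsub2)]
    refine setIntegral_congr_fun hBmeas fun x _ => ?_
    exact (integral_mul_const (w x) fun y => F (x, y)).symm
  have e3 : I = (∫ z in Ω ×ˢ Ωm, F z * w z.1 ∂μ) + ∫ z in B ×ˢ D, F z * w z.1 ∂μ := by
    rw [hIdef, hQdecomp]
    exact setIntegral_union hdisj (hBmeas.prod hDmeas)
      (hfw1.mono_set hQsub1) (hfw1.mono_set hQsub2)
  -- second term rewrite: (-∫) * w = -(∫ * w)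
  have e4 : ∫ x in B, (- ∫ y in D, F (x, y) ∂(κ x)) * w x ∂ν
      = - ∫ x in B, (∫ y in D, F (x, y) ∂(κ x)) * w x ∂ν := by
    rw [← integral_neg]
    congr 1; funext x; ring
  calc - ∫ x in Ω, (∫ y in Ωm, F (x, y) ∂(κ x)) * w x ∂ν
      + ∫ x in B, (- ∫ y in D, F (x, y) ∂(κ x)) * w x ∂ν
      = - ((∫ z in Ω ×ˢ Ωm, F z * w z.1 ∂μ) + ∫ z in B ×ˢ D, F z * w z.1 ∂μ) := by
        rw [e4, e1, e2]; ring
    _ = - I := by rw [e3]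
    _ = (1/2) * (- I - I) := by ring
    _ = (1/2) * ∫ z in Q, F z * (w z.2 - w z.1) ∂μ := by rw [hRHS]
end

section
/- Under the hypotheses of the integration by parts formula (reversible ν, ν(Ω_m) < ∞, antisymmetric kernel a_p(x,y,r) = -a_p(y,x,-r)), if u ∈ L^p(Ω_m, ν) and (x,y) ↦ a_p(x,y,u(y)-u(x)) is in L^1(Q_j, ν⊗m_x), then the nonlocal divergence theorem holds: ∫_Ω div_m a_p u(x) dν(x) = ∫_{∂_mΩ} N_j^{a_p} u(x) dν(x), for j = 1, 2. -/
open MeasureTheory ProbabilityTheory ENNReal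

/-- Nonlocal divergence theorem:
`∫_Ω div_m a_p u dν = ∫_{∂_mΩ} N_j^{a_p} u dν` for `j = 1, 2`. -/
theorem nonlocal_divergence_theorem
    {X : Type*} [MeasurableSpace X]
    (κ : Kernel X X) [IsMarkovKernel κ]
    (ν : Measure X) [SigmaFinite ν]
    (hrev : (ν ⊗ₘ κ).map Prod.swap = ν ⊗ₘ κ)
    (Ω : Set X) (hΩ : MeasurableSet Ω)
    (hfin : ν (mClosure κ Ω) < ⊤)
    (a : X → X → ℝ → ℝ)
    (ham : Measurable (fun z : (X × X) × ℝ => a z.1.1 z.1.2 z.2))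
    (hanti : ∀ x y : X, ∀ r : ℝ, a x y r = - a y x (-r))
    (p : ℝ≥0∞) (hp : 1 ≤ p)
    (j : Bool)
    (u : X → ℝ) (hum : Measurable u)
    (huL : MemLp u p (ν.restrict (mClosure κ Ω)))
    (hker : Integrable (fun z : X × X => a z.1 z.2 (u z.2 - u z.1))
      ((ν ⊗ₘ κ).restrict (Qset κ Ω j))) :
    ∫ x in Ω, (∫ y in mClosure κ Ω, a x y (u y - u x) ∂(κ x)) ∂ν
      = ∫ x in mBoundary κ Ω,
          (- ∫ y in Dset κ Ω j, a x y (u y - u x) ∂(κ x)) ∂ν := by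
  classical
  set F : X × X → ℝ := fun z => a z.1 z.2 (u z.2 - u z.1) with hF
  have hFm : Measurable F := by
    exact ham.comp (measurable_id.prodMk
      ((hum.comp measurable_snd).sub (hum.comp measurable_fst)))
  have hBm : MeasurableSet (mBoundary κ Ω) := by
    have h1 : Measurable fun x => κ x Ω := κ.measurable_coe hΩ
    have : mBoundary κ Ω = Ωᶜ ∩ {x | 0 < κ x Ω} := rfl
    rw [this]
    exact hΩ.compl.inter (measurableSet_lt measurable_const h1)
  have hMm : MeasurableSet (mClosure κ Ω) := hΩ.union hBm
  have hDm : MeasurableSet (Dset κ Ω j) := by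
    cases j <;> simp [Dset, hΩ, hMm]
  have hΩB : Disjoint Ω (mBoundary κ Ω) := by
    rw [Set.disjoint_left]; intro x hx hx'; exact hx'.1 hx
  set M := mClosure κ Ω
  set B := mBoundary κ Ω
  -- Q_j decomposes as a disjoint union
  have hQ : Qset κ Ω j = (Ω ×ˢ M) ∪ (B ×ˢ Dset κ Ω j) := by
    cases j
    · ext ⟨x, y⟩
      simp only [Qset, Dset, if_neg, Bool.false_eq_true, if_false, Set.mem_diff,
        Set.mem_prod, Set.mem_union]
      constructor
      · rintro ⟨⟨hx, hy⟩, hnot⟩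
        rcases hx with hx | hx
        · exact Or.inl ⟨hx, hy⟩
        · refine Or.inr ⟨hx, ?_⟩
          rcases hy with hy | hy
          · exact hy
          · exact absurd ⟨hx, hy⟩ hnot
      · rintro (⟨hx, hy⟩ | ⟨hx, hy⟩)
        · exact ⟨⟨Or.inl hx, hy⟩, fun h => h.1.1 hx⟩
        · exact ⟨⟨Or.inr hx, Or.inl hy⟩, fun h => h.2.1 hy⟩
    · ext ⟨x, y⟩
      simp only [Qset, Dset, if_pos, Set.mem_prod, Set.mem_union]
      constructor
      · rintro ⟨hx, hy⟩
        rcases hx with hx | hx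
        · exact Or.inl ⟨hx, hy⟩
        · exact Or.inr ⟨hx, hy⟩
      · rintro (⟨hx, hy⟩ | ⟨hx, hy⟩)
        · exact ⟨Or.inl hx, hy⟩
        · exact ⟨Or.inr hx, hy⟩
  have hQm : MeasurableSet (Qset κ Ω j) := by
    rw [hQ]; exact (hΩ.prod hMm).union (hBm.prod hDm)
  -- Q_j is symmetric under swap
  have hQsymm : Prod.swap ⁻¹' Qset κ Ω j = Qset κ Ω j := by
    cases j <;>
      · ext ⟨x, y⟩
        simp only [Qset, Set.mem_preimage, Prod.swap_prod_mk, Set.mem_prod, Set.mem_diff,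
          Bool.false_eq_true, if_false, if_pos]
        tauto
  -- the integral of F over Q_j vanishes
  have hzero : ∫ z in Qset κ Ω j, F z ∂(ν ⊗ₘ κ) = 0 := by
    have hmap : ((ν ⊗ₘ κ).restrict (Qset κ Ω j)).map Prod.swap
        = (ν ⊗ₘ κ).restrict (Qset κ Ω j) := by
      conv_rhs => rw [← hrev]
      rw [Measure.restrict_map measurable_swap hQm, hQsymm]
    have h1 : ∫ z in Qset κ Ω j, F z ∂(ν ⊗ₘ κ)
        = ∫ z in Qset κ Ω j, F (Prod.swap z) ∂(ν ⊗ₘ κ) := by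
      conv_lhs => rw [← hmap]
      rw [integral_map measurable_swap.aemeasurable
        (hFm.aestronglyMeasurable)]
    have hFanti : ∀ z : X × X, F (Prod.swap z) = - F z := by
      rintro ⟨x, y⟩
      simp only [F, Prod.swap_prod_mk]
      rw [hanti y x (u x - u y)]
      ring_nf
    simp_rw [hFanti] at h1
    rw [integral_neg] at h1
    linarith
  -- integrability on the two rectangles
  have hkerOn : IntegrableOn F (Qset κ Ω j) (ν ⊗ₘ κ) := hker
  have hint1 : IntegrableOn F (Ω ×ˢ M) (ν ⊗ₘ κ) :=
    hkerOn.mono_set (hQ ▸ Set.subset_union_left)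
  have hint2 : IntegrableOn F (B ×ˢ Dset κ Ω j) (ν ⊗ₘ κ) :=
    hkerOn.mono_set (hQ ▸ Set.subset_union_right)
  have hdisj : Disjoint (Ω ×ˢ M) (B ×ˢ Dset κ Ω j) := by
    rw [Set.disjoint_left]
    rintro ⟨x, y⟩ ⟨hx, _⟩ ⟨hx', _⟩
    exact (Set.disjoint_left.mp hΩB) hx hx'
  have hsplit : ∫ z in Qset κ Ω j, F z ∂(ν ⊗ₘ κ)
      = (∫ z in Ω ×ˢ M, F z ∂(ν ⊗ₘ κ)) + ∫ z in B ×ˢ Dset κ Ω j, F z ∂(ν ⊗ₘ κ) := by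
    rw [hQ]
    exact setIntegral_union hdisj (hBm.prod hDm) hint1 hint2
  have he1 : ∫ z in Ω ×ˢ M, F z ∂(ν ⊗ₘ κ)
      = ∫ x in Ω, ∫ y in M, a x y (u y - u x) ∂(κ x) ∂ν :=
    Measure.setIntegral_compProd hΩ hMm hint1
  have he2 : ∫ z in B ×ˢ Dset κ Ω j, F z ∂(ν ⊗ₘ κ)
      = ∫ x in B, ∫ y in Dset κ Ω j, a x y (u y - u x) ∂(κ x) ∂ν :=
    Measure.setIntegral_compProd hBm hDm hint2
  rw [he1, he2, hzero] at hsplit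
  rw [integral_neg]
  linarith
end

section
/- Let Ψ : ℝ → ℝ be defined by Ψ(r) := -∫_Ω a_p(x,y,u(y)-r) dm_x(y), where x ∈ ∂_mΩ is fixed with m_x(Ω) > 0, u ∈ L^p(Ω, m_x), and a_p satisfies strict monotonicity ((a_p(x,y,r)-a_p(x,y,s))(r-s) > 0 for r ≠ s), continuity in the last variable, the growth bound |a_p(x,y,r)| ≤ C(1+|r|^{p-1}), and coercivity a_p(x,y,r)r ≥ c|r|^p. Then Ψ is strictly increasing and for every φ(x) ∈ ℝ the equation Ψ(r) = φ(x) has a unique solution r. -/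
open MeasureTheory ENNReal Filter Topology

private lemma rpow_sub_one_le' (p : ℝ) (hp : 1 < p) (s : ℝ) :
    |s| ^ (p - 1) ≤ 1 + |s| ^ p := by
  have h2 : (0:ℝ) ≤ |s| ^ p := Real.rpow_nonneg (abs_nonneg s) p
  rcases le_or_gt (|s|) 1 with h | h
  · have := Real.rpow_le_one (abs_nonneg s) h (by linarith : (0:ℝ) ≤ p - 1)
    linarith
  · have := Real.rpow_le_rpow_of_exponent_le h.le (by linarith : p - 1 ≤ p)
    linarith

private lemma growth_bound' (p C : ℝ) (hp : 1 < p) (hC : 0 < C) (b : ℝ → ℝ)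
    (hgrowth : ∀ r : ℝ, |b r| ≤ C * (1 + |r| ^ (p - 1))) (s : ℝ) :
    |b s| ≤ C * (2 + |s| ^ p) := by
  have h1 := hgrowth s
  have h2 := rpow_sub_one_le' p hp s
  nlinarith

private lemma coer_neg' (p c : ℝ) (hp : 1 < p) (hc : 0 < c) (b : ℝ → ℝ)
    (hcoer : ∀ r : ℝ, c * |r| ^ p ≤ b r * r) {s : ℝ} (hs : s < 0) :
    b s ≤ -(c * (-s) ^ (p - 1)) := by
  have h0 : 0 < -s := neg_pos.2 hs
  have h1 : c * |s| ^ p ≤ b s * s := hcoer s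
  rw [abs_of_neg hs] at h1
  have h2 : (-s) ^ p = (-s) ^ (p - 1) * (-s) := by
    rw [← Real.rpow_add_one h0.ne' (p - 1)]; ring_nf
  have h3 : c * (-s) ^ (p - 1) * (-s) ≤ (-(b s)) * (-s) := by nlinarith
  have h4 := le_of_mul_le_mul_right h3 h0
  linarith

/-- Integrability of the integrand. -/
private lemma integrable_aux
    {X : Type*} [MeasurableSpace X]
    (μ : Measure X) [IsFiniteMeasure μ] (Ω : Set X)
    (p C : ℝ) (hp : 1 < p) (hC : 0 < C)
    (a : X → ℝ → ℝ)
    (ham : Measurable (fun z : X × ℝ => a z.1 z.2))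
    (hgrowth : ∀ y : X, ∀ r : ℝ, |a y r| ≤ C * (1 + |r| ^ (p - 1)))
    (u : X → ℝ) (hu : MemLp u (ENNReal.ofReal p) (μ.restrict Ω)) (r : ℝ) :
    Integrable (fun y => a y (u y - r)) (μ.restrict Ω) := by
  have hp0 : (0:ℝ) < p := by linarith
  -- measurability
  have hum : AEStronglyMeasurable u (μ.restrict Ω) := hu.1
  set v := hum.mk u with hv
  have hvm : StronglyMeasurable v := hum.stronglyMeasurable_mk
  have huv : u =ᵐ[μ.restrict Ω] v := hum.ae_eq_mk
  have hmeas : AEStronglyMeasurable (fun y => a y (u y - r)) (μ.restrict Ω) := by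
    have h1 : Measurable (fun y => a y (v y - r)) :=
      ham.comp (measurable_id.prodMk (hvm.measurable.sub measurable_const))
    exact h1.aestronglyMeasurable.congr
      (huv.mono fun y h => by simp only [← h])
  -- bound
  have hint : Integrable (fun y => C * (2 + |u y - r| ^ p)) (μ.restrict Ω) := by
    have h1 : MemLp (fun y => u y - r) (ENNReal.ofReal p) (μ.restrict Ω) :=
      hu.sub (memLp_const r)
    have h2 := h1.integrable_norm_rpow (ofReal_pos.mpr hp0).ne' ofReal_ne_top
    rw [toReal_ofReal hp0.le] at h2
    simp only [Real.norm_eq_abs] at h2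
    exact ((integrable_const (2:ℝ)).add h2).const_mul C
  refine hint.mono' hmeas (Eventually.of_forall fun y => ?_)
  rw [Real.norm_eq_abs]
  calc |a y (u y - r)| ≤ C * (2 + |u y - r| ^ p) :=
        growth_bound' p C hp hC (a y) (hgrowth y) _
    _ ≤ C * (2 + |u y - r| ^ p) := le_rfl

/-- The key "goes to `-∞`" lemma: for every `K` there is `r` with `∫ a y (u y - r) ≤ K`. -/
private lemma exists_integral_le
    {X : Type*} [MeasurableSpace X]
    (μ : Measure X) [IsFiniteMeasure μ]
    (Ω : Set X) (hΩpos : 0 < μ Ω)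
    (p c C : ℝ) (hp : 1 < p) (hc : 0 < c) (hC : 0 < C)
    (a : X → ℝ → ℝ)
    (ham : Measurable (fun z : X × ℝ => a z.1 z.2))
    (hmono : ∀ y : X, Monotone (a y))
    (hgrowth : ∀ y : X, ∀ r : ℝ, |a y r| ≤ C * (1 + |r| ^ (p - 1)))
    (hcoer : ∀ y : X, ∀ r : ℝ, c * |r| ^ p ≤ a y r * r)
    (u : X → ℝ) (hu : MemLp u (ENNReal.ofReal p) (μ.restrict Ω)) (K : ℝ) :
    ∃ r : ℝ, (∫ y in Ω, a y (u y - r) ∂μ) ≤ K := by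
  have hI : 0 < (μ Ω).toReal :=
    ENNReal.toReal_pos hΩpos.ne' (measure_ne_top μ Ω)
  set N : ℝ := (|K| + 1) / (μ Ω).toReal with hN
  have hNpos : 0 < N := by positivity
  have hlimK : (μ Ω).toReal * (-N) < K := by
    have : (μ Ω).toReal * (-N) = -(|K| + 1) := by
      rw [hN]; field_simp [hI.ne']
    rw [this]
    have := abs_nonneg K
    cases abs_cases K <;> linarith
  have intA := integrable_aux μ Ω p C hp hC a ham hgrowth u hu
  -- the truncated family
  set F : ℕ → X → ℝ := fun n y => max (a y (u y - n)) (-N) with hF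
  have hFint : ∀ n, Integrable (F n) (μ.restrict Ω) := fun n =>
    (intA n).sup (integrable_const (-N))
  have hFle : ∀ n : ℕ, ∀ y, a y (u y - n) ≤ a y (u y - 0) := fun n y =>
    hmono y (by simp [Nat.cast_nonneg])
  -- dominated convergence
  have hDCT : Tendsto (fun n : ℕ => ∫ y in Ω, F n y ∂μ) atTop
      (𝓝 (∫ _y in Ω, (-N) ∂μ)) := by
    refine tendsto_integral_of_dominated_convergence
      (fun y => |a y (u y - 0)| + N) (fun n => (hFint n).1)
      (((intA 0).abs.add (integrable_const N))) ?_ ?_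
    · intro n
      refine Eventually.of_forall fun y => ?_
      have h0 := abs_nonneg (a y (u y - 0))
      have h2 : -N ≤ F n y := le_max_right _ _
      have h1 : F n y ≤ max (|a y (u y - 0)|) (-N) :=
        max_le_max ((hFle n y).trans (le_abs_self _)) le_rfl
      have h3 : max (|a y (u y - 0)|) (-N) ≤ |a y (u y - 0)| + N := by
        apply max_le <;> linarith
      show ‖F n y‖ ≤ |a y (u y - 0)| + N
      rw [Real.norm_eq_abs, abs_le]
      constructor <;> linarith
    · refine Eventually.of_forall fun y => ?_
      -- eventually F n y = -N
      have hev : ∀ᶠ n : ℕ in atTop, F n y = -N := by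
        have h1 : Tendsto (fun x : ℝ => c * (x - u y) ^ (p - 1)) atTop atTop := by
          have hb : Tendsto (fun x : ℝ => x - u y) atTop atTop :=
            (tendsto_atTop_add_const_right atTop (-(u y)) tendsto_id).congr
              fun x => (sub_eq_add_neg x (u y)).symm
          have hr := (tendsto_rpow_atTop (by linarith : (0:ℝ) < p - 1)).comp hb
          exact hr.const_mul_atTop hc
        have h2 : Tendsto (fun n : ℕ => c * ((n : ℝ) - u y) ^ (p - 1)) atTop atTop :=
          h1.comp tendsto_natCast_atTop_atTop
        have h3 : ∀ᶠ n : ℕ in atTop, N ≤ c * ((n : ℝ) - u y) ^ (p - 1) :=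
          h2.eventually_ge_atTop N
        have h4 : ∀ᶠ n : ℕ in atTop, u y < (n : ℝ) :=
          tendsto_natCast_atTop_atTop.eventually_gt_atTop (u y)
        filter_upwards [h3, h4] with n h3 h4
        have hs : u y - (n : ℝ) < 0 := by linarith
        have h5 : a y (u y - n) ≤ -(c * (-(u y - (n:ℝ))) ^ (p - 1)) :=
          coer_neg' p c hp hc (a y) (hcoer y) hs
        have h6 : a y (u y - n) ≤ -N := by
          have : -(u y - (n:ℝ)) = (n:ℝ) - u y := by ring
          rw [this] at h5
          linarith
        simp only [hF, max_eq_right h6]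
      exact Tendsto.congr' (hev.mono fun n h => h.symm) tendsto_const_nhds
  rw [setIntegral_const, smul_eq_mul] at hDCT
  have hev : ∀ᶠ n : ℕ in atTop, (∫ y in Ω, F n y ∂μ) < K :=
    hDCT.eventually_lt_const hlimK
  obtain ⟨n, hn⟩ := hev.exists
  refine ⟨n, ?_⟩
  have hle : (∫ y in Ω, a y (u y - n) ∂μ) ≤ ∫ y in Ω, F n y ∂μ :=
    integral_mono (intA n) (hFint n) fun y => le_max_left _ _
  linarith

/-- Fix a point `x` of the boundary, with jump measure `μ = m_x` and
`μ(Ω) > 0`. Under strict monotonicity, continuity, growth and coercivity of the kernel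
`a_p(x,·,·)`, the function `Ψ(r) = -∫_Ω a_p(x,y,u(y)-r) dm_x(y)` is strictly increasing
and for every `t ∈ ℝ` the equation `Ψ(r) = t` has a unique solution. -/
theorem boundary_extension_unique_solution
    {X : Type*} [MeasurableSpace X]
    (μ : Measure X) [IsFiniteMeasure μ]
    (Ω : Set X) (hΩ : MeasurableSet Ω) (hΩpos : 0 < μ Ω)
    (p c C : ℝ) (hp : 1 < p) (hc : 0 < c) (hC : 0 < C)
    (a : X → ℝ → ℝ)
    (ham : Measurable (fun z : X × ℝ => a z.1 z.2))
    (hmono : ∀ y : X, ∀ r s : ℝ, r ≠ s → 0 < (a y r - a y s) * (r - s))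
    (hcont : ∀ y : X, Continuous (a y))
    (hgrowth : ∀ y : X, ∀ r : ℝ, |a y r| ≤ C * (1 + |r| ^ (p - 1)))
    (hcoer : ∀ y : X, ∀ r : ℝ, c * |r| ^ p ≤ a y r * r)
    (u : X → ℝ) (hu : MemLp u (ENNReal.ofReal p) (μ.restrict Ω)) :
    StrictMono (fun r : ℝ => - ∫ y in Ω, a y (u y - r) ∂μ)
      ∧ ∀ t : ℝ, ∃! r : ℝ, - ∫ y in Ω, a y (u y - r) ∂μ = t := by
  have hp0 : (0:ℝ) < p := by linarith
  have hamono : ∀ y : X, StrictMono (a y) := by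
    intro y r s hrs
    have h := hmono y s r (ne_of_gt hrs)
    nlinarith
  have intA := integrable_aux μ Ω p C hp hC a ham hgrowth u hu
  -- strict monotonicity of Ψ
  have hΨmono : StrictMono (fun r : ℝ => - ∫ y in Ω, a y (u y - r) ∂μ) := by
    intro r s hrs
    simp only [neg_lt_neg_iff]
    have hlt : ∀ y, a y (u y - s) < a y (u y - r) := fun y =>
      hamono y (by linarith)
    have hpos : 0 < ∫ y in Ω, (a y (u y - r) - a y (u y - s)) ∂μ := by
      rw [integral_pos_iff_support_of_nonneg
        (fun y => sub_nonneg.2 (hlt y).le) ((intA r).sub (intA s))]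
      have : Function.support (fun y => a y (u y - r) - a y (u y - s)) = Set.univ := by
        ext y; simp [Function.support, sub_ne_zero.2 (hlt y).ne']
      rw [this, Measure.restrict_apply_univ]
      exact hΩpos
    rw [integral_sub (intA r) (intA s)] at hpos
    linarith
  refine ⟨hΨmono, fun t => ?_⟩
  -- continuity of Ψ
  have hΨcont : Continuous (fun r : ℝ => - ∫ y in Ω, a y (u y - r) ∂μ) := by
    refine Continuous.neg ?_
    rw [continuous_iff_continuousAt]
    intro r₀
    refine continuousAt_of_dominated (bound := fun y => C * (2 + (|u y - r₀| + 1) ^ p))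
      (Eventually.of_forall fun r => (intA r).1) ?_ ?_ ?_
    · have hball : ∀ᶠ r : ℝ in nhds r₀, |r₀ - r| < 1 := by
        have h := Metric.ball_mem_nhds r₀ one_pos
        filter_upwards [h] with r hr
        rw [Metric.mem_ball, Real.dist_eq] at hr
        rw [abs_sub_comm]; exact hr
      filter_upwards [hball] with r hr
      refine Eventually.of_forall fun y => ?_
      rw [Real.norm_eq_abs]
      have h1 : |a y (u y - r)| ≤ C * (2 + |u y - r| ^ p) :=
        growth_bound' p C hp hC (a y) (hgrowth y) _
      have h2 : |u y - r| ≤ |u y - r₀| + 1 := by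
        have : u y - r = (u y - r₀) + (r₀ - r) := by ring
        rw [this]
        calc |(u y - r₀) + (r₀ - r)| ≤ |u y - r₀| + |r₀ - r| := abs_add_le _ _
          _ ≤ |u y - r₀| + 1 := by linarith
      have h3 : |u y - r| ^ p ≤ (|u y - r₀| + 1) ^ p :=
        Real.rpow_le_rpow (abs_nonneg _) h2 hp0.le
      calc |a y (u y - r)| ≤ C * (2 + |u y - r| ^ p) := h1
        _ ≤ C * (2 + (|u y - r₀| + 1) ^ p) := by nlinarith
    · -- integrability of the bound
      have h1 : MemLp (fun y => |u y - r₀| + 1) (ENNReal.ofReal p) (μ.restrict Ω) := by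
        have := (hu.sub (memLp_const r₀)).norm
        simp only [Real.norm_eq_abs] at this
        exact this.add (memLp_const 1)
      have h2 := h1.integrable_norm_rpow (ofReal_pos.mpr hp0).ne' ofReal_ne_top
      rw [toReal_ofReal hp0.le] at h2
      have h3 : (fun y => ‖|u y - r₀| + 1‖ ^ p) = fun y => (|u y - r₀| + 1) ^ p := by
        funext y
        rw [Real.norm_eq_abs, abs_of_nonneg (by positivity)]
      rw [h3] at h2
      exact ((integrable_const (2:ℝ)).add h2).const_mul C
    · refine Eventually.of_forall fun y => ?_
      exact ((hcont y).comp (continuous_const.sub continuous_id)).continuousAt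
  -- existence of r₁ with Ψ r₁ ≥ t : use the lemma with value -t
  obtain ⟨r₁, hr₁⟩ := exists_integral_le μ Ω hΩpos p c C hp hc hC a ham
    (fun y => (hamono y).monotone) hgrowth hcoer u hu (-t)
  -- existence of r₂ with Ψ r₂ ≤ t : apply the lemma to the reflected kernel
  obtain ⟨r₂', hr₂'⟩ := exists_integral_le μ Ω hΩpos p c C hp hc hC
    (fun y s => -a y (-s))
    (by
      have : Measurable fun z : X × ℝ => a z.1 (-z.2) :=
        ham.comp (measurable_fst.prodMk measurable_snd.neg)
      exact this.neg)
    (fun y r s hrs => by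
      have := (hamono y).monotone (neg_le_neg hrs)
      simpa using this)
    (fun y r => by
      have := hgrowth y (-r)
      simpa [abs_neg] using this)
    (fun y r => by
      have h := hcoer y (-r)
      simp only [abs_neg] at h
      have h2 : a y (-r) * -r = -a y (-r) * r := by ring
      show c * |r| ^ p ≤ -a y (-r) * r
      linarith)
    (fun y => -u y) hu.neg t
  have hr₂ : -t ≤ ∫ y in Ω, a y (u y - (-r₂')) ∂μ := by
    have heq : (∫ y in Ω, (fun y s => -a y (-s)) y ((fun y => -u y) y - r₂') ∂μ)
        = - ∫ y in Ω, a y (u y - (-r₂')) ∂μ := by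
      rw [← integral_neg]
      congr 1
      funext y
      simp only [neg_neg]
      congr 2
      ring
    rw [heq] at hr₂'
    linarith
  set r₂ : ℝ := -r₂' with hr₂def
  set Ψ : ℝ → ℝ := fun r : ℝ => - ∫ y in Ω, a y (u y - r) ∂μ with hΨ
  have hΨr₁ : t ≤ Ψ r₁ := by simp only [hΨ]; linarith
  have hΨr₂ : Ψ r₂ ≤ t := by simp only [hΨ]; linarith
  -- intermediate value theorem
  have hmin : Ψ (min r₂ r₁) ≤ t := by
    rcases min_choice r₂ r₁ with h | h
    · rw [h]; exact hΨr₂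
    · rw [h]
      exact le_trans (hΨmono.monotone (by rw [← h]; exact min_le_left _ _)) hΨr₂
  have hmax : t ≤ Ψ (max r₂ r₁) := by
    rcases max_choice r₂ r₁ with h | h
    · rw [h]
      exact le_trans hΨr₁ (hΨmono.monotone (by rw [← h]; exact le_max_right _ _))
    · rw [h]; exact hΨr₁
  have himage := intermediate_value_Icc (min_le_max (a := r₂) (b := r₁))
    hΨcont.continuousOn
  obtain ⟨r, _, hr⟩ := himage ⟨hmin, hmax⟩
  exact ⟨r, hr, fun y hy => hΨmono.injective (hy.trans hr.symm)⟩
end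

section
/- Let [X,d,m] be a metric random walk space with invariant reversible measure ν, Ω ⊂ X with ν(Ω_m) < ∞, φ ∈ L^{m,∞}(∂_mΩ, ν), and let u : Ω_m → ℝ with u|_Ω ∈ L^∞(Ω, ν) satisfy the Neumann boundary condition -∫_Ω a_p(x,y,u(y)-u(x)) dm_x(y) = φ(x) for ν-a.e. x ∈ ∂_mΩ, where a_p satisfies coercivity a_p(x,y,r)r ≥ c|r|^p and strict monotonicity in r. Then ‖u‖_{L^∞(∂_mΩ,ν)} ≤ ‖u‖_{L^∞(Ω,ν)} + c^{-1/(p-1)} ‖φ/m_{(·)}(Ω)‖_{L^∞(∂_mΩ,ν)}^{1/(p-1)}. -/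
/-!
Let `M = ‖u‖_{L^∞(Ω)}` and suppose `|u(x)| = M + s` with `s > 0` at a boundary point `x`. Since
`m_x ≪ ν`, `|u| ≤ M` holds `m_x`-a.e. on `Ω`, so every increment `u(y) - u(x)` has the sign of
`-u(x)` and modulus at least `s`. Coercivity then gives `|a_p(x,y,u(y)-u(x))| ≥ c s^{p-1}` with a
constant sign, and integrating over `Ω` yields `|φ(x)| ≥ c s^{p-1} m_x(Ω)`, i.e.
`s ≤ (‖φ/m_·(Ω)‖_∞ / c)^{1/(p-1)}`.
-/

open MeasureTheory ProbabilityTheory ENNReal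

lemma measurableSet_mBoundary {X : Type*} [MeasurableSpace X] (κ : Kernel X X) {Ω : Set X}
    (hΩ : MeasurableSet Ω) : MeasurableSet (mBoundary κ Ω) :=
  hΩ.compl.inter (measurableSet_lt measurable_const (κ.measurable_coe hΩ))

lemma ae_norm_le_toReal_eLpNorm_top {α E : Type*} [MeasurableSpace α] [NormedAddCommGroup E]
    {μ : Measure α} {f : α → E} (hf : eLpNorm f ⊤ μ ≠ ⊤) :
    ∀ᵐ x ∂μ, ‖f x‖ ≤ (eLpNorm f ⊤ μ).toReal := by
  filter_upwards [ae_le_eLpNormEssSup (f := f) (μ := μ)] with x hx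
  rwa [← ENNReal.ofReal_le_iff_le_toReal hf, ofReal_norm, eLpNorm_exponent_top]

lemma mul_rpow_sub_one_le_of_coercive {c p r A : ℝ} (hr : 0 < r)
    (h : c * |r| ^ p ≤ A * r) : c * r ^ (p - 1) ≤ A := by
  rw [abs_of_pos hr] at h
  rw [Real.rpow_sub_one hr.ne', ← mul_div_assoc, div_le_iff₀ hr]
  exact h

section Coercive

variable {α : Type*} [MeasurableSpace α] {μ : Measure α} {f g : α → ℝ} {c p x₀ : ℝ}

lemma mul_rpow_mul_measureReal_le_integral_of_coercive {s : ℝ} (hp : 1 ≤ p) (hc : 0 ≤ c)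
    (hs : 0 < s) (hcoer : ∀ y, c * |f y - x₀| ^ p ≤ g y * (f y - x₀))
    (hf : ∀ᵐ y ∂μ, x₀ + s ≤ f y) (hg : Integrable g μ) :
    c * s ^ (p - 1) * μ.real Set.univ ≤ ∫ y, g y ∂μ := by
  have hg_ge : ∀ᵐ y ∂μ, c * s ^ (p - 1) ≤ g y := by
    filter_upwards [hf] with y hy
    have hsr : s ≤ f y - x₀ := by linarith
    calc c * s ^ (p - 1) ≤ c * (f y - x₀) ^ (p - 1) := by gcongr
      _ ≤ g y := mul_rpow_sub_one_le_of_coercive (hs.trans_le hsr) (hcoer y)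
  have hconst_nonneg : 0 ≤ c * s ^ (p - 1) := by positivity
  calc c * s ^ (p - 1) * μ.real Set.univ = ∫ _, c * s ^ (p - 1) ∂μ := by
        rw [integral_const, smul_eq_mul, mul_comm]
    _ ≤ ∫ y, g y ∂μ := integral_mono_of_nonneg (ae_of_all _ fun _ => hconst_nonneg) hg hg_ge

lemma mul_rpow_mul_measureReal_le_abs_integral_of_coercive {M : ℝ} (hp : 1 ≤ p) (hc : 0 ≤ c)
    (hM : M < |x₀|) (hcoer : ∀ y, c * |f y - x₀| ^ p ≤ g y * (f y - x₀))
    (hf : ∀ᵐ y ∂μ, |f y| ≤ M) (hg : Integrable g μ) :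
    c * (|x₀| - M) ^ (p - 1) * μ.real Set.univ ≤ |∫ y, g y ∂μ| := by
  have hs : 0 < |x₀| - M := sub_pos.mpr hM
  rcases lt_or_ge x₀ 0 with hx₀ | hx₀
  · refine (mul_rpow_mul_measureReal_le_integral_of_coercive hp hc hs hcoer ?_ hg).trans
      (le_abs_self _)
    filter_upwards [hf] with y hy
    rw [abs_of_neg hx₀]
    linarith [neg_abs_le (f y)]
  · have hcoer_neg : ∀ y, c * |-f y - -x₀| ^ p ≤ -g y * (-f y - -x₀) := fun y => by
      rw [neg_sub_neg, ← neg_sub, abs_neg, neg_mul_neg]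
      exact hcoer y
    have hf_neg : ∀ᵐ y ∂μ, -x₀ + (|x₀| - M) ≤ -f y := by
      filter_upwards [hf] with y hy
      rw [abs_of_nonneg hx₀]
      linarith [le_abs_self (f y)]
    have := mul_rpow_mul_measureReal_le_integral_of_coercive hp hc hs hcoer_neg hf_neg hg.neg
    rw [integral_neg] at this
    exact this.trans (neg_le_abs _)

lemma abs_le_add_rpow_of_coercive {M K : ℝ} (hp : 1 < p) (hc : 0 < c)
    (hμ : 0 < μ.real Set.univ) (hcoer : ∀ y, c * |f y - x₀| ^ p ≤ g y * (f y - x₀))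
    (hf : ∀ᵐ y ∂μ, |f y| ≤ M) (hg : Integrable g μ)
    (hK : |∫ y, g y ∂μ| / μ.real Set.univ ≤ K) :
    |x₀| ≤ M + (K / c) ^ (1 / (p - 1)) := by
  by_contra! hlt
  have hK_nonneg : 0 ≤ K := (div_nonneg (abs_nonneg _) hμ.le).trans hK
  have hM : M < |x₀| := by
    linarith [Real.rpow_nonneg (div_nonneg hK_nonneg hc.le) (1 / (p - 1))]
  have hbound := mul_rpow_mul_measureReal_le_abs_integral_of_coercive hp.le hc.le hM hcoer hf hg
  have hpow : (|x₀| - M) ^ (p - 1) ≤ K / c := by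
    rw [le_div_iff₀' hc]
    exact le_of_mul_le_mul_right (hbound.trans ((div_le_iff₀ hμ).mp hK)) hμ
  rw [← Real.le_rpow_inv_iff_of_pos (sub_pos.mpr hM).le (by positivity) (by linarith),
    ← one_div] at hpow
  linarith

end Coercive

theorem boundary_linfty_bound_general
    {X : Type*} [MeasurableSpace X]
    (κ : Kernel X X) [IsMarkovKernel κ]
    (ν : Measure X)
    (habs : ∀ x, κ x ≪ ν)
    (Ω : Set X) (hΩ : MeasurableSet Ω)
    (p c : ℝ) (hp : 1 < p) (hc : 0 < c)
    (a : X → X → ℝ → ℝ)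
    (hcoer : ∀ x y : X, ∀ r : ℝ, c * |r| ^ p ≤ a x y r * r)
    (u : X → ℝ)
    (huL : eLpNorm u ⊤ (ν.restrict Ω) < ⊤)
    (φ : X → ℝ)
    (hφL : eLpNorm (fun x => φ x / (κ x Ω).toReal) ⊤ (ν.restrict (mBoundary κ Ω)) < ⊤)
    (hbc : ∀ᵐ x ∂(ν.restrict (mBoundary κ Ω)),
      Integrable (fun y => a x y (u y - u x)) ((κ x).restrict Ω) ∧
        - ∫ y in Ω, a x y (u y - u x) ∂(κ x) = φ x) :
    eLpNorm u ⊤ (ν.restrict (mBoundary κ Ω))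
      ≤ eLpNorm u ⊤ (ν.restrict Ω)
        + (ENNReal.ofReal c)⁻¹ ^ (1 / (p - 1)) *
          (eLpNorm (fun x => φ x / (κ x Ω).toReal) ⊤
            (ν.restrict (mBoundary κ Ω))) ^ (1 / (p - 1)) := by
  set M := (eLpNorm u ⊤ (ν.restrict Ω)).toReal
  set K := (eLpNorm (fun x => φ x / (κ x Ω).toReal) ⊤ (ν.restrict (mBoundary κ Ω))).toReal
  have hu_le : ∀ᵐ y ∂(ν.restrict Ω), ‖u y‖ ≤ M := ae_norm_le_toReal_eLpNorm_top huL.ne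
  have hφ_le := ae_norm_le_toReal_eLpNorm_top hφL.ne
  have hbound : ∀ᵐ x ∂(ν.restrict (mBoundary κ Ω)), ‖u x‖ ≤ M + (K / c) ^ (1 / (p - 1)) := by
    filter_upwards [hbc, hφ_le, ae_restrict_mem (measurableSet_mBoundary κ hΩ)]
      with x ⟨hint, heq⟩ hφx hx
    have hmass : ((κ x).restrict Ω).real Set.univ = (κ x Ω).toReal :=
      measureReal_restrict_apply_univ _
    have hmass_pos : 0 < (κ x Ω).toReal := ENNReal.toReal_pos hx.2.ne' (measure_ne_top _ _)
    refine abs_le_add_rpow_of_coercive hp hc (hmass ▸ hmass_pos)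
      (fun y => hcoer x y (u y - u x)) (((habs x).restrict Ω).ae_le hu_le) hint ?_
    rwa [hmass, ← abs_neg, heq, ← abs_of_pos hmass_pos, ← abs_div, ← Real.norm_eq_abs]
  have hM : ENNReal.ofReal M = eLpNorm u ⊤ (ν.restrict Ω) := ENNReal.ofReal_toReal huL.ne
  have hK : ENNReal.ofReal K = eLpNorm (fun x => φ x / (κ x Ω).toReal) ⊤
      (ν.restrict (mBoundary κ Ω)) := ENNReal.ofReal_toReal hφL.ne
  calc eLpNorm u ⊤ (ν.restrict (mBoundary κ Ω))
      ≤ ENNReal.ofReal (M + (K / c) ^ (1 / (p - 1))) := by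
        rw [eLpNorm_exponent_top]
        exact eLpNormEssSup_le_of_ae_bound hbound
    _ = _ := by
      have he : 0 ≤ 1 / (p - 1) := (one_div_pos.mpr (sub_pos.mpr hp)).le
      rw [ENNReal.ofReal_add ENNReal.toReal_nonneg (by positivity),
        ← ENNReal.ofReal_rpow_of_nonneg (by positivity) he, ENNReal.ofReal_div_of_pos hc,
        div_eq_mul_inv, ENNReal.mul_rpow_of_nonneg _ _ he, hM, hK, mul_comm]

/-- `L^∞` bound on the boundary for solutions of the
Dipierro–Ros-Oton–Valdinoci Neumann condition: if `u|_Ω ∈ L^∞(Ω,ν)`,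
`φ ∈ L^{m,∞}(∂_mΩ,ν)` and `-∫_Ω a_p(x,y,u(y)-u(x)) dm_x(y) = φ(x)` a.e. on `∂_mΩ`, then
`‖u‖_{L^∞(∂_mΩ,ν)} ≤ ‖u‖_{L^∞(Ω,ν)} + c^{-1/(p-1)} ‖φ/m_·(Ω)‖_{L^∞(∂_mΩ,ν)}^{1/(p-1)}`. -/
theorem boundary_linfty_bound
    {X : Type*} [MeasurableSpace X]
    (κ : Kernel X X) [IsMarkovKernel κ]
    (ν : Measure X) [SigmaFinite ν]
    (habs : ∀ x, κ x ≪ ν)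
    (Ω : Set X) (hΩ : MeasurableSet Ω)
    (hfin : ν (mClosure κ Ω) < ⊤)
    (p c : ℝ) (hp : 1 < p) (hc : 0 < c)
    (a : X → X → ℝ → ℝ)
    (ham : Measurable (fun z : (X × X) × ℝ => a z.1.1 z.1.2 z.2))
    (hcoer : ∀ x y : X, ∀ r : ℝ, c * |r| ^ p ≤ a x y r * r)
    (hmono : ∀ x y : X, ∀ r s : ℝ, r ≠ s → 0 < (a x y r - a x y s) * (r - s))
    (u : X → ℝ) (hum : Measurable u)
    (huL : eLpNorm u ⊤ (ν.restrict Ω) < ⊤)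
    (φ : X → ℝ) (hφm : Measurable φ)
    (hφL : eLpNorm (fun x => φ x / (κ x Ω).toReal) ⊤ (ν.restrict (mBoundary κ Ω)) < ⊤)
    (hbc : ∀ᵐ x ∂(ν.restrict (mBoundary κ Ω)),
      Integrable (fun y => a x y (u y - u x)) ((κ x).restrict Ω) ∧
        - ∫ y in Ω, a x y (u y - u x) ∂(κ x) = φ x) :
    eLpNorm u ⊤ (ν.restrict (mBoundary κ Ω))
      ≤ eLpNorm u ⊤ (ν.restrict Ω)
        + (ENNReal.ofReal c)⁻¹ ^ (1 / (p - 1)) *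
          (eLpNorm (fun x => φ x / (κ x Ω).toReal) ⊤
            (ν.restrict (mBoundary κ Ω))) ^ (1 / (p - 1)) :=
  boundary_linfty_bound_general κ ν habs Ω hΩ p c hp hc a hcoer u huL φ hφL hbc
end

section
/- In the graph of the previous example with Ω = {x₀}, ∂_mΩ = {x₁, x₂, ...}, p > 1, and a_p(x,y,r) = |r|^{p-2}r, the function u defined by u(x₀) = 0, u(x_n) = 2^{n/(p-1)}, satisfies: (i) u(x₀) - Σ_{n≥1} |u(x_n) - u(x₀)|^{p-2}(u(x_n)-u(x₀)) m_{x₀}({x_n}) = -12/5, and (ii) -|u(x₀)-u(x_n)|^{p-2}(u(x₀)-u(x_n)) m_{x_n}({x₀}) = (6/7)^n for each n ≥ 1. In particular u solves the nonlocal Neumann problem with data v(x₀) = -12/5 ∈ L^∞(Ω,ν) and φ(x_n) = (6/7)^n ∈ L^∞(∂_mΩ,ν), yet u ∉ L^∞(Ω_m, ν). -/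
/-!
With `u(x₀) = 0`, the flux `|r|^{p-2} r = r^{p-1}` of the jump `r = u(x_n) - u(x₀) = 2^{n/(p-1)}`
is exactly `2ⁿ`. Against the weights `6/7ⁿ` this gives the geometric series
`Σ_{n≥1} 6 (2/7)ⁿ = 12/5`, and against `(3/7)ⁿ` it gives `(6/7)ⁿ`; meanwhile `2^{n/(p-1)} → ∞`.
-/

open Filter

theorem abs_rpow_sub_two_mul_self_of_pos {x : ℝ} (hx : 0 < x) (p : ℝ) :
    |x| ^ (p - 2) * x = x ^ (p - 1) := by
  rw [abs_of_pos hx, show p - 1 = p - 2 + 1 by ring, Real.rpow_add_one hx.ne']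

theorem rpow_div_rpow_cancel {b : ℝ} (hb : 0 ≤ b) (t : ℝ) {q : ℝ} (hq : q ≠ 0) :
    (b ^ (t / q)) ^ q = b ^ t := by
  rw [← Real.rpow_mul hb, div_mul_cancel₀ t hq]

theorem tsum_ite_eq_zero_geometric {r : ℝ} (hr : |r| < 1) (c : ℝ) :
    ∑' n : ℕ, (if n = 0 then 0 else c * r ^ n) = c * r / (1 - r) := by
  have hshift : ∀ n : ℕ, c * r ^ (n + 1) = c * r * r ^ n := fun n => by ring
  have hs := (summable_geometric_of_abs_lt_one hr).mul_left (c * r)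
  rw [tsum_eq_zero_add' (by simpa [hshift] using hs)]
  simp only [if_true, Nat.add_one_ne_zero, if_false, zero_add, hshift]
  rw [tsum_mul_left, tsum_geometric_of_abs_lt_one hr, div_eq_mul_inv]

theorem tendsto_rpow_natCast_div_atTop {b q : ℝ} (hb : 1 < b) (hq : 0 < q) :
    Tendsto (fun n : ℕ => b ^ ((n : ℝ) / q)) atTop atTop := by
  have h := (tendsto_rpow_atTop (inv_pos.2 hq)).comp (tendsto_pow_atTop_atTop_of_one_lt hb)
  refine h.congr fun n => ?_
  simp [div_eq_mul_inv, Real.rpow_natCast_mul (zero_le_one.trans hb.le)]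

/-- In the graph with `m_{x₀}({x_n}) = 6/7ⁿ` and
`m_{x_n}({x₀}) = (3/7)ⁿ`, `Ω = {x₀}`, `a_p(x,y,r) = |r|^{p-2} r` and
`u(x₀) = 0`, `u(x_n) = 2^{n/(p-1)}`:
(i) `u(x₀) - Σ_{n≥1} |u(x_n)-u(x₀)|^{p-2}(u(x_n)-u(x₀)) · 6/7ⁿ = -12/5`;
(ii) `-|u(x₀)-u(x_n)|^{p-2}(u(x₀)-u(x_n)) · (3/7)ⁿ = (6/7)ⁿ` for `n ≥ 1`;
(iii) `u` is unbounded, i.e. `u ∉ L^∞(Ω_m, ν)`. -/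
theorem exampleGraph_unbounded_solution
    (p : ℝ) (hp : 1 < p)
    (u : ℕ → ℝ)
    (hu0 : u 0 = 0)
    (hun : ∀ n : ℕ, n ≠ 0 → u n = (2 : ℝ) ^ ((n : ℝ) / (p - 1))) :
    (u 0 - ∑' n : ℕ,
        (if n = 0 then 0
         else |u n - u 0| ^ (p - 2) * (u n - u 0) * (6 * (1 / 7 : ℝ) ^ n)) = -(12 / 5))
    ∧ (∀ n : ℕ, n ≠ 0 →
        -(|u 0 - u n| ^ (p - 2) * (u 0 - u n)) * ((3 / 7 : ℝ) ^ n) = (6 / 7 : ℝ) ^ n)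
    ∧ (∀ M : ℝ, ∃ n : ℕ, M < u n) := by
  have hp1 : 0 < p - 1 := sub_pos.2 hp
  have flux : ∀ n : ℕ, n ≠ 0 → |u n - u 0| ^ (p - 2) * (u n - u 0) = 2 ^ n := by
    intro n hn
    rw [hu0, sub_zero, hun n hn, abs_rpow_sub_two_mul_self_of_pos (by positivity),
      rpow_div_rpow_cancel zero_le_two _ hp1.ne', Real.rpow_natCast]
  refine ⟨?_, fun n hn => ?_, fun M => ?_⟩
  · have hterm : ∀ n : ℕ, (if n = 0 then 0
        else |u n - u 0| ^ (p - 2) * (u n - u 0) * (6 * (1 / 7 : ℝ) ^ n))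
          = if n = 0 then 0 else 6 * (2 / 7 : ℝ) ^ n := fun n => by
      split_ifs with hn
      · rfl
      · rw [flux n hn, div_pow, div_pow]; ring
    rw [tsum_congr hterm, tsum_ite_eq_zero_geometric (by norm_num [abs_of_pos]), hu0]
    norm_num
  · rw [abs_sub_comm, ← mul_neg, neg_sub, flux n hn, ← mul_pow]
    norm_num
  · obtain ⟨n, hMn, hn⟩ := ((tendsto_rpow_natCast_div_atTop one_lt_two hp1).eventually_gt_atTop M
      |>.and (eventually_ne_atTop 0)).exists
    exact ⟨n, hun n hn ▸ hMn⟩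
end

section
/- Let [X,d,m] be a metric random walk space with reversible measure ν, Ω ⊂ X with ν(Ω_m) < ∞. Let u₁, u₂ ∈ L²(Ω,ν) admit extensions ū₁, ū₂ ∈ L²(Ω_m,ν) satisfying 0 = ∫_{Ω_m}(ū_i(y)-ū_i(x)) dm_x(y) for all x ∈ ∂_mΩ (i = 1,2). Then ∫_{∂_mΩ} m_x(Ω)(ū₁(x)-ū₂(x))² dν(x) + ∫_{∂_mΩ×∂_mΩ} ((ū₁(y)-ū₂(y))-(ū₁(x)-ū₂(x)))² d(ν⊗m_x)(x,y) ≤ ∫_Ω (u₁(x)-u₂(x))² dν(x). -/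
open MeasureTheory ProbabilityTheory ENNReal

/-- Contraction estimate for the homogeneous linear (`p = 2`) nonlocal
Neumann condition: if `ū₁, ū₂ ∈ L²(Ω_m,ν)` satisfy
`∫_{Ω_m} (ū_i(y) - ū_i(x)) dm_x(y) = 0` for every `x ∈ ∂_mΩ`, then
`∫_{∂_mΩ} m_x(Ω)(ū₁-ū₂)² dν + ∫_{∂_mΩ×∂_mΩ} ((ū₁-ū₂)(y)-(ū₁-ū₂)(x))² d(ν ⊗ₘ κ)
  ≤ ∫_Ω (u₁-u₂)² dν`. -/
theorem neumann_harmonic_extension_contraction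
    {X : Type*} [MeasurableSpace X]
    (κ : Kernel X X) [IsMarkovKernel κ]
    (ν : Measure X) [SigmaFinite ν]
    (habs : ∀ x, κ x ≪ ν)
    (hrev : (ν ⊗ₘ κ).map Prod.swap = ν ⊗ₘ κ)
    (Ω : Set X) (hΩ : MeasurableSet Ω)
    (hfin : ν (mClosure κ Ω) < ⊤)
    (u₁ u₂ : X → ℝ) (h1m : Measurable u₁) (h2m : Measurable u₂)
    (h1L : MemLp u₁ 2 (ν.restrict (mClosure κ Ω)))
    (h2L : MemLp u₂ 2 (ν.restrict (mClosure κ Ω)))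
    (h1int : ∀ x ∈ mBoundary κ Ω, Integrable u₁ ((κ x).restrict (mClosure κ Ω)))
    (h2int : ∀ x ∈ mBoundary κ Ω, Integrable u₂ ((κ x).restrict (mClosure κ Ω)))
    (hbc1 : ∀ x ∈ mBoundary κ Ω, ∫ y in mClosure κ Ω, (u₁ y - u₁ x) ∂(κ x) = 0)
    (hbc2 : ∀ x ∈ mBoundary κ Ω, ∫ y in mClosure κ Ω, (u₂ y - u₂ x) ∂(κ x) = 0) :
    ∫ x in mBoundary κ Ω, (κ x Ω).toReal * (u₁ x - u₂ x) ^ 2 ∂ν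
      + ∫ z in (mBoundary κ Ω) ×ˢ (mBoundary κ Ω),
          ((u₁ z.2 - u₂ z.2) - (u₁ z.1 - u₂ z.1)) ^ 2 ∂(ν ⊗ₘ κ)
      ≤ ∫ x in Ω, (u₁ x - u₂ x) ^ 2 ∂ν := by
  classical
  set w : X → ℝ := fun x => u₁ x - u₂ x with hwdef
  have hwm : Measurable w := h1m.sub h2m
  have young : ∀ a b : ℝ, a * b ≤ (a ^ 2 + b ^ 2) / 2 := fun a b => by
    nlinarith [sq_nonneg (a - b)]
  have youngabs : ∀ a b : ℝ, |a * b| ≤ a ^ 2 + b ^ 2 := fun a b => by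
    rw [abs_mul]
    nlinarith [sq_nonneg (|a| - |b|), sq_abs a, sq_abs b, abs_nonneg a, abs_nonneg b]
  set D : Set X := mBoundary κ Ω with hDdef
  set S : Set X := mClosure κ Ω with hSdef
  have hD : MeasurableSet D := by
    have : D = Ωᶜ ∩ ((fun x => κ x Ω) ⁻¹' Set.Ioi 0) := by
      ext x; simp [hDdef, mBoundary]
    rw [this]
    exact hΩ.compl.inter ((κ.measurable_coe hΩ) measurableSet_Ioi)
  have hS : MeasurableSet S := hΩ.union hD
  have hΩS : Ω ⊆ S := Set.subset_union_left
  have hDS : D ⊆ S := Set.subset_union_right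
  have hdisj : Disjoint Ω D := by
    rw [Set.disjoint_left]; intro x hx hx'; exact hx'.1 hx
  set μ : Measure (X × X) := ν ⊗ₘ κ with hμdef
  -- finiteness of ν on S
  have hfinS : IsFiniteMeasure (ν.restrict S) :=
    ⟨by rwa [Measure.restrict_apply_univ]⟩
  -- w is L² on S
  have hw2 : MemLp w 2 (ν.restrict S) := h1L.sub h2L
  have hwsq : IntegrableOn (fun x => w x ^ 2) S ν := hw2.integrable_sq
  -- lintegral finiteness of w² on S
  have hwsq_lt : ∫⁻ x in S, (‖w x‖₊ : ℝ≥0∞) ^ 2 ∂ν < ⊤ := by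
    have := hwsq.hasFiniteIntegral
    unfold HasFiniteIntegral at this
    refine lt_of_eq_of_lt (lintegral_congr fun x => ?_) this
    rw [enorm_pow]; rfl
  -- integrability of (x,y) ↦ w x ^ 2 on S ×ˢ S
  have hmeas1 : Measurable fun z : X × X => w z.1 ^ 2 :=
    (hwm.comp measurable_fst).pow_const 2
  have hmeas2 : Measurable fun z : X × X => w z.2 ^ 2 :=
    (hwm.comp measurable_snd).pow_const 2
  have hsq1 : IntegrableOn (fun z : X × X => w z.1 ^ 2) (S ×ˢ S) μ := by
    refine ⟨hmeas1.aestronglyMeasurable, ?_⟩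
    unfold HasFiniteIntegral
    have hm : Measurable fun z : X × X => (‖w z.1‖₊ : ℝ≥0∞) ^ 2 :=
      ((hwm.comp measurable_fst).nnnorm.coe_nnreal_ennreal).pow_const 2
    calc ∫⁻ z in S ×ˢ S, (‖w z.1 ^ 2‖₊ : ℝ≥0∞) ∂μ
        = ∫⁻ z in S ×ˢ S, (‖w z.1‖₊ : ℝ≥0∞) ^ 2 ∂μ := by
          simp [← ENNReal.coe_pow, nnnorm_pow]
      _ = ∫⁻ x in S, ∫⁻ y in S, (‖w x‖₊ : ℝ≥0∞) ^ 2 ∂(κ x) ∂ν := by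
          rw [hμdef, Measure.setLIntegral_compProd hm hS hS]
      _ = ∫⁻ x in S, (‖w x‖₊ : ℝ≥0∞) ^ 2 * κ x S ∂ν := by
          refine lintegral_congr fun x => ?_
          rw [setLIntegral_const]
      _ ≤ ∫⁻ x in S, (‖w x‖₊ : ℝ≥0∞) ^ 2 ∂ν := by
          refine lintegral_mono fun x => ?_
          exact mul_le_of_le_one_right zero_le prob_le_one
      _ < ⊤ := hwsq_lt
  -- swap machinery
  have hmapr : ∀ (A : Set (X × X)), MeasurableSet A →
      (μ.restrict (Prod.swap ⁻¹' A)).map Prod.swap = μ.restrict A := by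
    intro A hA
    conv_rhs => rw [← hrev]
    rw [Measure.restrict_map measurable_swap hA]
  have hintswap : ∀ (A : Set (X × X)), MeasurableSet A → ∀ (g : X × X → ℝ),
      Measurable g →
      ∫ z in A, g z ∂μ = ∫ z in Prod.swap ⁻¹' A, g (Prod.swap z) ∂μ := by
    intro A hA g hg
    rw [← hmapr A hA,
      integral_map measurable_swap.aemeasurable hg.aestronglyMeasurable]
  have hintegswap : ∀ (A : Set (X × X)), MeasurableSet A → ∀ (g : X × X → ℝ),
      Measurable g →
      IntegrableOn (fun z => g (Prod.swap z)) (Prod.swap ⁻¹' A) μ →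
      IntegrableOn g A μ := by
    intro A hA g hg h
    rw [IntegrableOn, ← hmapr A hA,
      integrable_map_measure hg.aestronglyMeasurable measurable_swap.aemeasurable]
    exact h
  have hsq2 : IntegrableOn (fun z : X × X => w z.2 ^ 2) (S ×ˢ S) μ := by
    refine hintegswap _ (hS.prod hS) _ hmeas2 ?_
    rw [Set.preimage_swap_prod]
    exact hsq1
  have hmul : IntegrableOn (fun z : X × X => w z.1 * w z.2) (S ×ˢ S) μ := by
    refine (hsq1.add hsq2).mono' ((hwm.comp measurable_fst).mul
      (hwm.comp measurable_snd)).aestronglyMeasurable ?_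
    filter_upwards with z
    rw [Real.norm_eq_abs]
    exact youngabs (w z.1) (w z.2)
  have hF : IntegrableOn (fun z : X × X => (w z.2 - w z.1) * w z.1) (S ×ˢ S) μ :=
    (hmul.sub hsq1).congr (Filter.Eventually.of_forall fun z => by
      simp only [Pi.sub_apply, Pi.add_apply, hwdef]; ring)
  have hF' : IntegrableOn (fun z : X × X => (w z.1 - w z.2) * w z.2) (S ×ˢ S) μ :=
    (hmul.sub hsq2).congr (Filter.Eventually.of_forall fun z => by
      simp only [Pi.sub_apply, Pi.add_apply, hwdef]; ring)
  have hG : IntegrableOn (fun z : X × X => (w z.2 - w z.1) ^ 2) (S ×ˢ S) μ :=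
    ((hsq1.add hsq2).sub ((hmul.const_mul 2))).congr
      (Filter.Eventually.of_forall fun z => by
        simp only [Pi.sub_apply, Pi.add_apply, hwdef]; ring)
  -- boundary condition for w
  have hbcw : ∀ x ∈ D, ∫ y in S, (w y - w x) ∂(κ x) = 0 := by
    intro x hx
    have hi1 : Integrable (fun y => u₁ y - u₁ x) ((κ x).restrict S) :=
      (h1int x hx).sub (integrable_const _)
    have hi2 : Integrable (fun y => u₂ y - u₂ x) ((κ x).restrict S) :=
      (h2int x hx).sub (integrable_const _)
    calc ∫ y in S, (w y - w x) ∂(κ x)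
        = ∫ y in S, ((u₁ y - u₁ x) - (u₂ y - u₂ x)) ∂(κ x) := by
          refine integral_congr_ae (Filter.Eventually.of_forall fun y => ?_)
          simp only [hwdef]; ring
      _ = (∫ y in S, (u₁ y - u₁ x) ∂(κ x)) - ∫ y in S, (u₂ y - u₂ x) ∂(κ x) :=
          integral_sub hi1 hi2
      _ = 0 := by rw [hbc1 x hx, hbc2 x hx, sub_zero]
  have hbcmul : ∀ x ∈ D, ∫ y in S, (w y - w x) * w x ∂(κ x) = 0 := by
    intro x hx
    rw [integral_mul_const, hbcw x hx, zero_mul]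
  -- the integral over D ×ˢ S vanishes
  have hzero : ∫ z in D ×ˢ S, (w z.2 - w z.1) * w z.1 ∂μ = 0 := by
    rw [hμdef, Measure.setIntegral_compProd hD hS
      (hF.mono_set (Set.prod_mono_left hDS))]
    calc ∫ x in D, ∫ y in S, (w y - w x) * w x ∂(κ x) ∂ν
        = ∫ x in D, (0 : ℝ) ∂ν := by
          refine setIntegral_congr_fun hD fun x hx => hbcmul x hx
      _ = 0 := integral_zero _ _
  -- split D ×ˢ S = D ×ˢ Ω ∪ D ×ˢ D
  have hFDΩ : IntegrableOn (fun z : X × X => (w z.2 - w z.1) * w z.1) (D ×ˢ Ω) μ :=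
    hF.mono_set (Set.prod_mono hDS hΩS)
  have hFDD : IntegrableOn (fun z : X × X => (w z.2 - w z.1) * w z.1) (D ×ˢ D) μ :=
    hF.mono_set (Set.prod_mono hDS hDS)
  have hsplit : ∫ z in D ×ˢ S, (w z.2 - w z.1) * w z.1 ∂μ
      = (∫ z in D ×ˢ Ω, (w z.2 - w z.1) * w z.1 ∂μ)
        + ∫ z in D ×ˢ D, (w z.2 - w z.1) * w z.1 ∂μ := by
    have hU : D ×ˢ S = D ×ˢ Ω ∪ D ×ˢ D := by
      rw [hSdef, mClosure, Set.prod_union]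
    have hdisj2 : Disjoint (D ×ˢ Ω) (D ×ˢ D) := by
      rw [Set.disjoint_left]
      rintro ⟨a, b⟩ ⟨_, hb⟩ ⟨_, hb'⟩
      exact hb'.1 hb
    rw [hU, setIntegral_union hdisj2 (hD.prod hD) hFDΩ hFDD]
  -- the D ×ˢ Ω part
  set A : ℝ := ∫ x in D, (κ x Ω).toReal * w x ^ 2 ∂ν with hAdef
  set P : ℝ := ∫ z in D ×ˢ Ω, w z.1 * w z.2 ∂μ with hPdef
  have hA2 : ∫ z in D ×ˢ Ω, w z.1 ^ 2 ∂μ = A := by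
    rw [hμdef, Measure.setIntegral_compProd hD hΩ
      (hsq1.mono_set (Set.prod_mono hDS hΩS))]
    refine setIntegral_congr_fun hD fun x _ => ?_
    show ∫ _ in Ω, w x ^ 2 ∂(κ x) = (κ x Ω).toReal * w x ^ 2
    rw [setIntegral_const, smul_eq_mul, measureReal_def, mul_comm]
  have hDΩ : ∫ z in D ×ˢ Ω, (w z.2 - w z.1) * w z.1 ∂μ = P - A := by
    rw [← hA2, hPdef]
    rw [← integral_sub (hmul.mono_set (Set.prod_mono hDS hΩS))
      (hsq1.mono_set (Set.prod_mono hDS hΩS))]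
    refine integral_congr_ae (Filter.Eventually.of_forall fun z => ?_)
    simp only [hwdef]; ring
  -- the D ×ˢ D part and symmetry
  set T : ℝ := ∫ z in D ×ˢ D, (w z.2 - w z.1) * w z.1 ∂μ with hTdef
  set B : ℝ := ∫ z in D ×ˢ D, (w z.2 - w z.1) ^ 2 ∂μ with hBdef
  have hT' : T = ∫ z in D ×ˢ D, (w z.1 - w z.2) * w z.2 ∂μ := by
    rw [hTdef, hintswap (D ×ˢ D) (hD.prod hD)
      (fun z => (w z.2 - w z.1) * w z.1) (by fun_prop)]
    rw [Set.preimage_swap_prod]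
    simp only [Prod.fst_swap, Prod.snd_swap]
  have h2T : 2 * T = -B := by
    have : T + T = T + ∫ z in D ×ˢ D, (w z.1 - w z.2) * w z.2 ∂μ := by
      rw [← hT']
    rw [two_mul, this, hTdef, hBdef,
      ← integral_add hFDD (hF'.mono_set (Set.prod_mono hDS hDS)), ← integral_neg]
    refine integral_congr_ae (Filter.Eventually.of_forall fun z => ?_)
    simp only [hwdef]; ring
  -- Young's inequality bound for P
  set Q : ℝ := ∫ z in D ×ˢ Ω, w z.2 ^ 2 ∂μ with hQdef
  have hP : P ≤ (A + Q) / 2 := by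
    have h1 : P ≤ ∫ z in D ×ˢ Ω, ((w z.1 ^ 2 + w z.2 ^ 2) / 2) ∂μ := by
      refine integral_mono (hmul.mono_set (Set.prod_mono hDS hΩS))
        (((hsq1.mono_set (Set.prod_mono hDS hΩS)).add
          (hsq2.mono_set (Set.prod_mono hDS hΩS))).div_const 2) fun z =>
        young (w z.1) (w z.2)
    have h2 : ∫ z in D ×ˢ Ω, ((w z.1 ^ 2 + w z.2 ^ 2) / 2) ∂μ = (A + Q) / 2 := by
      rw [← hA2, hQdef]
      rw [integral_div, integral_add (hsq1.mono_set (Set.prod_mono hDS hΩS))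
        (hsq2.mono_set (Set.prod_mono hDS hΩS))]
    linarith
  -- bound Q by the integral over Ω
  have hQ : Q ≤ ∫ x in Ω, w x ^ 2 ∂ν := by
    have hswapQ : Q = ∫ z in Ω ×ˢ D, w z.1 ^ 2 ∂μ := by
      rw [hQdef, hintswap (D ×ˢ Ω) (hD.prod hΩ)
        (fun z => w z.2 ^ 2) hmeas2, Set.preimage_swap_prod]
      simp only [Prod.snd_swap]
    have hQ2 : Q = ∫ x in Ω, (κ x D).toReal * w x ^ 2 ∂ν := by
      rw [hswapQ, hμdef, Measure.setIntegral_compProd hΩ hD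
        (hsq1.mono_set (Set.prod_mono hΩS hDS))]
      refine setIntegral_congr_fun hΩ fun x _ => ?_
      show ∫ _ in D, w x ^ 2 ∂(κ x) = (κ x D).toReal * w x ^ 2
      rw [setIntegral_const, smul_eq_mul, measureReal_def, mul_comm]
    rw [hQ2]
    have hle : ∀ x, (κ x D).toReal * w x ^ 2 ≤ w x ^ 2 := by
      intro x
      have h1 : (κ x D).toReal ≤ 1 := by
        have := measure_mono (μ := κ x) (Set.subset_univ D)
        calc (κ x D).toReal ≤ (κ x Set.univ).toReal :=
              ENNReal.toReal_mono (by simp) this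
          _ = 1 := by simp
      nlinarith [sq_nonneg (w x)]
    refine integral_mono ?_ (hwsq.mono_set hΩS) hle
    refine (hwsq.mono_set hΩS).mono'
      (((κ.measurable_coe hD).ennreal_toReal.mul
        (hwm.pow_const 2)).aestronglyMeasurable) ?_
    filter_upwards with x
    have h0 : 0 ≤ (κ x D).toReal * w x ^ 2 :=
      mul_nonneg ENNReal.toReal_nonneg (sq_nonneg _)
    simp only [Real.norm_eq_abs, abs_of_nonneg h0]
    exact hle x
  -- assemble
  have hmain : A + B ≤ ∫ x in Ω, w x ^ 2 ∂ν := by linarith [hzero, hsplit, hDΩ]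
  -- identify with the goal
  have hgoal : ∫ x in D, (κ x Ω).toReal * w x ^ 2 ∂ν
      + ∫ z in D ×ˢ D, (w z.2 - w z.1) ^ 2 ∂μ
      ≤ ∫ x in Ω, w x ^ 2 ∂ν := hmain
  simpa only [hwdef] using hgoal
end

section
/- In the setting of the previous statement, the harmonic extension is unique: if u ∈ L²(Ω,ν) and T₁(u), T₂(u) ∈ L²(Ω_m,ν) both restrict to u on Ω and both satisfy 0 = ∫_{Ω_m}(T_i(u)(y)-T_i(u)(x)) dm_x(y) for all x ∈ ∂_mΩ, then T₁(u) = T₂(u) ν-a.e. on ∂_mΩ (note m_x(Ω) > 0 for x ∈ ∂_mΩ). -/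
open MeasureTheory ProbabilityTheory ENNReal NNReal

private lemma ennreal_mul_le_half_add_sq (a b : ℝ≥0∞) :
    a * b ≤ 2⁻¹ * (a ^ 2 + b ^ 2) := by
  rcases eq_or_ne a ⊤ with ha | ha
  · rcases eq_or_ne b 0 with hb | hb
    · simp [hb]
    · have h : a ^ 2 + b ^ 2 = ⊤ := by simp [ha]
      rw [h]
      simp [ENNReal.mul_top (pow_ne_zero 2 hb), ENNReal.mul_top hb]
  · rcases eq_or_ne b ⊤ with hb | hb
    · rcases eq_or_ne a 0 with ha0 | ha0
      · simp [ha0]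
      · have h : a ^ 2 + b ^ 2 = ⊤ := by simp [hb]
        rw [h]
        simp [ENNReal.mul_top (pow_ne_zero 2 ha0)]
    · lift a to ℝ≥0 using ha
      lift b to ℝ≥0 using hb
      have key : (a : ℝ) * b ≤ 2⁻¹ * ((a:ℝ) ^ 2 + b ^ 2) := by nlinarith [sq_nonneg ((a:ℝ) - b)]
      have key2 : a * b ≤ 2⁻¹ * (a ^ 2 + b ^ 2) := by
        rw [← NNReal.coe_le_coe]; push_cast; exact key
      calc (a : ℝ≥0∞) * b = ((a * b : ℝ≥0) : ℝ≥0∞) := by push_cast; ring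
        _ ≤ ((2⁻¹ * (a ^ 2 + b ^ 2) : ℝ≥0) : ℝ≥0∞) := by exact_mod_cast key2
        _ = 2⁻¹ * ((a:ℝ≥0∞) ^ 2 + (b:ℝ≥0∞) ^ 2) := by push_cast; ring

/-- Uniqueness of the harmonic extension: if `T₁(u), T₂(u) ∈ L²(Ω_m,ν)`
both restrict to `u` on `Ω` and both satisfy `∫_{Ω_m}(T_i(u)(y)-T_i(u)(x)) dm_x(y) = 0`
for every `x ∈ ∂_mΩ`, then `T₁(u) = T₂(u)` `ν`-a.e. on `∂_mΩ`. -/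
theorem neumann_harmonic_extension_unique
    {X : Type*} [MeasurableSpace X]
    (κ : Kernel X X) [IsMarkovKernel κ]
    (ν : Measure X) [SigmaFinite ν]
    (habs : ∀ x, κ x ≪ ν)
    (hrev : (ν ⊗ₘ κ).map Prod.swap = ν ⊗ₘ κ)
    (Ω : Set X) (hΩ : MeasurableSet Ω)
    (hfin : ν (mClosure κ Ω) < ⊤)
    (u T₁ T₂ : X → ℝ) (h1m : Measurable T₁) (h2m : Measurable T₂)
    (hres1 : ∀ x ∈ Ω, T₁ x = u x)
    (hres2 : ∀ x ∈ Ω, T₂ x = u x)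
    (h1L : MemLp T₁ 2 (ν.restrict (mClosure κ Ω)))
    (h2L : MemLp T₂ 2 (ν.restrict (mClosure κ Ω)))
    (h1int : ∀ x ∈ mBoundary κ Ω, Integrable T₁ ((κ x).restrict (mClosure κ Ω)))
    (h2int : ∀ x ∈ mBoundary κ Ω, Integrable T₂ ((κ x).restrict (mClosure κ Ω)))
    (hbc1 : ∀ x ∈ mBoundary κ Ω, ∫ y in mClosure κ Ω, (T₁ y - T₁ x) ∂(κ x) = 0)
    (hbc2 : ∀ x ∈ mBoundary κ Ω, ∫ y in mClosure κ Ω, (T₂ y - T₂ x) ∂(κ x) = 0) :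
    ∀ᵐ x ∂(ν.restrict (mBoundary κ Ω)), T₁ x = T₂ x := by
  classical
  set B : Set X := mBoundary κ Ω with hBdef
  set Ωm : Set X := mClosure κ Ω with hΩmdef
  have hκΩmeas : Measurable fun x => κ x Ω := κ.measurable_coe hΩ
  have hB : MeasurableSet B := by
    have hEq : B = Ωᶜ ∩ {x | 0 < κ x Ω} := by
      ext x; simp [hBdef, mBoundary, Set.mem_setOf_eq]
    rw [hEq]
    exact hΩ.compl.inter (measurableSet_lt measurable_const hκΩmeas)
  have hΩmEq : Ωm = Ω ∪ B := rfl
  have hΩmMeas : MeasurableSet Ωm := hΩ.union hB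
  have hΩsub : Ω ⊆ Ωm := Set.subset_union_left
  have hBsub : B ⊆ Ωm := Set.subset_union_right
  have hdisj : Disjoint Ω B := by
    rw [Set.disjoint_left]
    intro x hx hxB
    exact hxB.1 hx
  -- the difference
  set w : X → ℝ := fun x => T₁ x - T₂ x with hwdef
  have hwm : Measurable w := h1m.sub h2m
  have hw0 : ∀ x ∈ Ω, w x = 0 := fun x hx => by
    simp [hwdef, hres1 x hx, hres2 x hx]
  -- the squared function in ℝ≥0∞
  set W : X → ℝ≥0∞ := fun x => (‖w x‖₊ : ℝ≥0∞) ^ 2 with hWdef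
  have hWm : Measurable W := hwm.nnnorm.coe_nnreal_ennreal.pow_const 2
  -- basic measure facts
  have hκtop : ∀ x, κ x Ωm ≠ ⊤ := fun x => (measure_lt_top _ _).ne
  have hκsplit : ∀ x, κ x Ωm = κ x Ω + κ x B := fun x => by
    rw [hΩmEq]; exact measure_union hdisj hB
  -- Step 1: the harmonic equation for w
  have Eq1 : ∀ x ∈ B, ∫ y in B, w y ∂(κ x) = w x * (κ x Ωm).toReal := by
    intro x hx
    have hI1 : Integrable T₁ ((κ x).restrict Ωm) := h1int x hx
    have hI2 : Integrable T₂ ((κ x).restrict Ωm) := h2int x hx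
    have hIw : Integrable w ((κ x).restrict Ωm) := hI1.sub hI2
    have hconst1 : Integrable (fun _ : X => T₁ x) ((κ x).restrict Ωm) := integrable_const _
    have hconst2 : Integrable (fun _ : X => T₂ x) ((κ x).restrict Ωm) := integrable_const _
    have e1 : ∫ y in Ωm, T₁ y ∂(κ x) = T₁ x * (κ x Ωm).toReal := by
      have := hbc1 x hx
      rw [integral_sub hI1 hconst1, setIntegral_const, sub_eq_zero] at this
      rw [this, smul_eq_mul, measureReal_def]; ring
    have e2 : ∫ y in Ωm, T₂ y ∂(κ x) = T₂ x * (κ x Ωm).toReal := by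
      have := hbc2 x hx
      rw [integral_sub hI2 hconst2, setIntegral_const, sub_eq_zero] at this
      rw [this, smul_eq_mul, measureReal_def]; ring
    have ew : ∫ y in Ωm, w y ∂(κ x) = w x * (κ x Ωm).toReal := by
      rw [hwdef]
      simp only
      rw [integral_sub hI1 hI2, e1, e2]
      ring
    have hIΩ : IntegrableOn w Ω (κ x) := hIw.mono_measure (Measure.restrict_mono hΩsub le_rfl)
    have hIB : IntegrableOn w B (κ x) := hIw.mono_measure (Measure.restrict_mono hBsub le_rfl)
    have hsplit : ∫ y in Ωm, w y ∂(κ x) = (∫ y in Ω, w y ∂(κ x)) + ∫ y in B, w y ∂(κ x) := by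
      rw [hΩmEq]
      exact setIntegral_union hdisj hB hIΩ hIB
    have hzero : ∫ y in Ω, w y ∂(κ x) = 0 := by
      rw [setIntegral_congr_fun hΩ (fun y hy => hw0 y hy)]
      simp
    rw [← ew, hsplit, hzero, zero_add]
  -- Step 2: pointwise key inequality
  have PK : ∀ x ∈ B, W x * κ x Ωm ≤ ∫⁻ y in B, 2⁻¹ * (W x + W y) ∂(κ x) := by
    intro x hx
    have hI1 : Integrable T₁ ((κ x).restrict Ωm) := h1int x hx
    have hI2 : Integrable T₂ ((κ x).restrict Ωm) := h2int x hx
    have hIw : Integrable w ((κ x).restrict Ωm) := hI1.sub hI2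
    have hIB : IntegrableOn w B (κ x) := hIw.mono_measure (Measure.restrict_mono hBsub le_rfl)
    set r : ℝ := (κ x Ωm).toReal with hrdef
    have step1 : W x * κ x Ωm = ENNReal.ofReal (w x ^ 2 * r) := by
      rw [ENNReal.ofReal_mul (sq_nonneg _), ENNReal.ofReal_toReal (hκtop x)]
      congr 1
      rw [← sq_abs, ← Real.norm_eq_abs, ENNReal.ofReal_pow (norm_nonneg _),
        ofReal_norm, enorm_eq_nnnorm]
    have step2 : w x ^ 2 * r ≤ |w x| * ∫ y in B, |w y| ∂(κ x) := by
      have h1 : w x ^ 2 * r = w x * ∫ y in B, w y ∂(κ x) := by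
        rw [Eq1 x hx]; ring
      rw [h1]
      calc w x * ∫ y in B, w y ∂(κ x) ≤ |w x * ∫ y in B, w y ∂(κ x)| := le_abs_self _
        _ = |w x| * |∫ y in B, w y ∂(κ x)| := abs_mul _ _
        _ ≤ |w x| * ∫ y in B, |w y| ∂(κ x) := by
            apply mul_le_mul_of_nonneg_left _ (abs_nonneg _)
            simpa [Real.norm_eq_abs] using
              norm_integral_le_integral_norm (μ := (κ x).restrict B) w
    have step4 : ENNReal.ofReal (∫ y in B, |w y| ∂(κ x)) ≤ ∫⁻ y in B, (‖w y‖₊ : ℝ≥0∞) ∂(κ x) := by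
      have := ofReal_integral_norm_eq_lintegral_enorm hIB
      simp only [Real.norm_eq_abs, enorm_eq_nnnorm] at this
      rw [this]
    calc W x * κ x Ωm = ENNReal.ofReal (w x ^ 2 * r) := step1
      _ ≤ ENNReal.ofReal (|w x| * ∫ y in B, |w y| ∂(κ x)) := ENNReal.ofReal_le_ofReal step2
      _ = ENNReal.ofReal |w x| * ENNReal.ofReal (∫ y in B, |w y| ∂(κ x)) :=
          ENNReal.ofReal_mul (abs_nonneg _)
      _ ≤ (‖w x‖₊ : ℝ≥0∞) * ∫⁻ y in B, (‖w y‖₊ : ℝ≥0∞) ∂(κ x) := by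
          rw [← Real.norm_eq_abs, ofReal_norm, enorm_eq_nnnorm]
          exact mul_le_mul_right step4 _
      _ = ∫⁻ y in B, (‖w x‖₊ : ℝ≥0∞) * (‖w y‖₊ : ℝ≥0∞) ∂(κ x) := by
          rw [lintegral_const_mul _ hwm.nnnorm.coe_nnreal_ennreal]
      _ ≤ ∫⁻ y in B, 2⁻¹ * (W x + W y) ∂(κ x) := by
          apply lintegral_mono
          intro y
          exact ennreal_mul_le_half_add_sq _ _
  -- Step 3: reversibility symmetry
  have hsym : ∫⁻ x in B, ∫⁻ y in B, W y ∂(κ x) ∂ν = ∫⁻ x in B, W x * κ x B ∂ν := by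
    have h1 : ∫⁻ x in B, ∫⁻ y in B, W y ∂(κ x) ∂ν = ∫⁻ p in B ×ˢ B, W p.2 ∂(ν ⊗ₘ κ) :=
      (Measure.setLIntegral_compProd (show Measurable fun p : X × X => W p.2 from hWm.comp measurable_snd) hB hB).symm
    have h2 : ∫⁻ x in B, W x * κ x B ∂ν = ∫⁻ p in B ×ˢ B, W p.1 ∂(ν ⊗ₘ κ) := by
      rw [Measure.setLIntegral_compProd (show Measurable fun p : X × X => W p.1 from hWm.comp measurable_fst) hB hB]
      congr 1
      ext x
      simp [setLIntegral_const]
    rw [h1, h2]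
    conv_lhs => rw [← hrev]
    rw [Measure.restrict_map measurable_swap ((hB.prod hB))]
    rw [lintegral_map (show Measurable fun p : X × X => W p.2 from hWm.comp measurable_snd) measurable_swap]
    have hpre : Prod.swap ⁻¹' (B ×ˢ B) = B ×ˢ B := by
      rw [Set.preimage_swap_prod]
    rw [hpre]
    rfl
  -- Step 4: finiteness of M
  have hMfin : ∫⁻ x in B, W x * κ x B ∂ν ≠ ⊤ := by
    have hle1 : ∫⁻ x in B, W x * κ x B ∂ν ≤ ∫⁻ x in B, W x ∂ν := by
      apply lintegral_mono
      intro x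
      calc W x * κ x B ≤ W x * 1 := mul_le_mul_right prob_le_one _
        _ = W x := mul_one _
    have hle2 : ∫⁻ x in B, W x ∂ν ≤ ∫⁻ x in Ωm, W x ∂ν := lintegral_mono_set hBsub
    have hwL : MemLp w 2 (ν.restrict Ωm) := h1L.sub h2L
    have hsq : Integrable (fun x => w x ^ 2) (ν.restrict Ωm) := hwL.integrable_sq
    have hfin2 : ∫⁻ x in Ωm, W x ∂ν < ⊤ := by
      have h2fin : ∫⁻ x in Ωm, (‖w x ^ 2‖₊ : ℝ≥0∞) ∂ν < ⊤ := hsq.2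
      have hfun : (fun x => (‖w x ^ 2‖₊ : ℝ≥0∞)) = W := by
        ext x
        rw [hWdef]
        simp [nnnorm_pow]
      rwa [hfun] at h2fin
    exact ((hle1.trans hle2).trans_lt hfin2).ne
  -- Step 5: combine
  have hL : ∫⁻ x in B, W x * κ x Ωm ∂ν
      = (∫⁻ x in B, W x * κ x Ω ∂ν) + ∫⁻ x in B, W x * κ x B ∂ν := by
    rw [← lintegral_add_left (f := fun x => W x * κ x Ω) (hWm.mul hκΩmeas)]
    congr 1
    ext x
    rw [hκsplit x, mul_add]
  have hLle : ∫⁻ x in B, W x * κ x Ωm ∂ν ≤ ∫⁻ x in B, W x * κ x B ∂ν := by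
    calc ∫⁻ x in B, W x * κ x Ωm ∂ν
        ≤ ∫⁻ x in B, ∫⁻ y in B, 2⁻¹ * (W x + W y) ∂(κ x) ∂ν := by
          apply lintegral_mono_ae
          filter_upwards [ae_restrict_mem hB] with x hx
          exact PK x hx
      _ = ∫⁻ x in B, 2⁻¹ * (W x * κ x B + ∫⁻ y in B, W y ∂(κ x)) ∂ν := by
          congr 1
          ext x
          rw [lintegral_const_mul _ (f := fun y => W x + W y) (measurable_const.add hWm)]
          congr 1
          rw [lintegral_add_left measurable_const, setLIntegral_const]
      _ = 2⁻¹ * ((∫⁻ x in B, W x * κ x B ∂ν) + ∫⁻ x in B, ∫⁻ y in B, W y ∂(κ x) ∂ν) := by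
          rw [← lintegral_add_left (f := fun x => W x * κ x B) (hWm.mul (κ.measurable_coe hB))]
          exact lintegral_const_mul _ ((hWm.mul (κ.measurable_coe hB)).add
            (Measurable.setLIntegral_kernel (κ := κ) hWm hB))
      _ = 2⁻¹ * ((∫⁻ x in B, W x * κ x B ∂ν) + ∫⁻ x in B, W x * κ x B ∂ν) := by rw [hsym]
      _ = ∫⁻ x in B, W x * κ x B ∂ν := by
          rw [← two_mul, ← mul_assoc, ENNReal.inv_mul_cancel (by norm_num) (by norm_num), one_mul]
  have hN0 : ∫⁻ x in B, W x * κ x Ω ∂ν = 0 := by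
    have h : (∫⁻ x in B, W x * κ x Ω ∂ν) + ∫⁻ x in B, W x * κ x B ∂ν
        ≤ 0 + ∫⁻ x in B, W x * κ x B ∂ν := by
      rw [zero_add, ← hL]
      exact hLle
    exact le_antisymm (ENNReal.le_of_add_le_add_right hMfin h) zero_le
  have hae : ∀ᵐ x ∂(ν.restrict B), W x * κ x Ω = 0 :=
    (lintegral_eq_zero_iff (hWm.mul hκΩmeas)).mp hN0
  filter_upwards [hae, ae_restrict_mem hB] with x hx hxB
  rcases mul_eq_zero.mp hx with h | h
  · have : w x = 0 := by
      have h2 : (‖w x‖₊ : ℝ≥0∞) = 0 := by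
        rw [hWdef] at h
        simpa using pow_eq_zero_iff (n := 2) (by norm_num) |>.mp h
      simpa using h2
    exact sub_eq_zero.mp this
  · exact absurd h hxB.2.ne'
end

section
/- Let [X,d,m] be a metric random walk space with reversible measure ν, Ω with ν(Ω_m) < ∞, and u : Ω_m → ℝ with u|_Ω ∈ L^{p-1}(Ω,ν) (p > 1) and ∫_{Q₂}|a_p(x,y,u(y)-u(x))| d(ν⊗m_x) < ∞, where a_p satisfies c|r|^{p-1} ≤ |a_p(x,y,r)|. Then m_{(·)}(Ω)|u|^{p-1} ∈ L^1(∂_mΩ, ν); that is, ∫_{∂_mΩ} m_x(Ω)|u(x)|^{p-1} dν(x) < +∞. -/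
/-!
On `∂_mΩ × Ω` write `|u(x)|^{p-1} ≤ 2^{p-1} (|u(y) - u(x)|^{p-1} + |u(y)|^{p-1})`.
Integrating against `ν ⊗ m_x`, the left side gives `∫_{∂_mΩ} m_x(Ω) |u(x)|^{p-1} dν(x)`.
The first term on the right is controlled by `|a_p(x, y, u(y) - u(x))| / c`, and
`∂_mΩ × Ω ⊆ Q₂`; by reversibility the second term is at most `∫_Ω |u|^{p-1} dν`,
because `m_x` is a probability measure.
-/

open MeasureTheory ProbabilityTheory ENNReal

/-- `Q₂ = (Ω_m × Ω_m) \ (∂_mΩ × ∂_mΩ)`. -/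
def Q2set {X : Type*} [MeasurableSpace X] (κ : Kernel X X) (Ω : Set X) : Set (X × X) :=
  ((mClosure κ Ω) ×ˢ (mClosure κ Ω)) \ ((mBoundary κ Ω) ×ˢ (mBoundary κ Ω))

lemma mBoundary_prod_subset_Q2set {X : Type*} [MeasurableSpace X] (κ : Kernel X X)
    (Ω : Set X) : mBoundary κ Ω ×ˢ Ω ⊆ Q2set κ Ω :=
  fun _ ⟨hx, hy⟩ => ⟨⟨Or.inr hx, Or.inl hy⟩, fun h => h.2.1 hy⟩

lemma ofReal_abs_rpow_le_two_rpow_mul {q : ℝ} (hq : 0 ≤ q) (s t : ℝ) :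
    ENNReal.ofReal (|s| ^ q) ≤
      2 ^ q * (ENNReal.ofReal (|t - s| ^ q) + ENNReal.ofReal (|t| ^ q)) := by
  simp only [← ENNReal.ofReal_rpow_of_nonneg (abs_nonneg _) hq]
  have htriangle : ENNReal.ofReal |s| ≤ ENNReal.ofReal |t - s| + ENNReal.ofReal |t| := by
    rw [← ENNReal.ofReal_add (abs_nonneg _) (abs_nonneg _), abs_sub_comm]
    exact ENNReal.ofReal_le_ofReal (by linarith [abs_sub_abs_le_abs_sub s t])
  calc ENNReal.ofReal |s| ^ q ≤ (ENNReal.ofReal |t - s| + ENNReal.ofReal |t|) ^ q := by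
        gcongr
    _ ≤ _ := add_rpow_le_two_rpow_mul_rpow_add_rpow _ _ hq

section CompProd

variable {X Y : Type*} [MeasurableSpace X] [MeasurableSpace Y] {ν : Measure X} [SFinite ν]

lemma setLIntegral_compProd_comp_fst (κ : Kernel X Y) [IsSFiniteKernel κ] {f : X → ℝ≥0∞}
    (hf : Measurable f) {A : Set X} {B : Set Y} (hA : MeasurableSet A) (hB : MeasurableSet B) :
    ∫⁻ z in A ×ˢ B, f z.1 ∂(ν ⊗ₘ κ) = ∫⁻ x in A, κ x B * f x ∂ν := by
  rw [Measure.setLIntegral_compProd (f := fun z => f z.1) (hf.comp measurable_fst) hA hB]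
  simp only [setLIntegral_const, mul_comm]

lemma setLIntegral_compProd_comp_snd_le_of_map_swap (κ : Kernel X X) [IsMarkovKernel κ]
    (hrev : (ν ⊗ₘ κ).map Prod.swap = ν ⊗ₘ κ) {f : X → ℝ≥0∞} (hf : Measurable f) (A : Set X)
    {B : Set X} (hB : MeasurableSet B) :
    ∫⁻ z in A ×ˢ B, f z.2 ∂(ν ⊗ₘ κ) ≤ ∫⁻ x in B, f x ∂ν := by
  have hswap : MeasurePreserving Prod.swap (ν ⊗ₘ κ) (ν ⊗ₘ κ) := ⟨measurable_swap, hrev⟩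
  calc ∫⁻ z in A ×ˢ B, f z.2 ∂(ν ⊗ₘ κ) ≤ ∫⁻ z in Set.univ ×ˢ B, f z.2 ∂(ν ⊗ₘ κ) :=
        lintegral_mono_set (Set.prod_mono (Set.subset_univ A) le_rfl)
    _ = ∫⁻ z in B ×ˢ Set.univ, f z.1 ∂(ν ⊗ₘ κ) := by
        rw [← hswap.setLIntegral_comp_preimage (f := fun z => f z.2)
          (MeasurableSet.univ.prod hB) (hf.comp measurable_snd), Set.preimage_swap_prod]
        rfl
    _ = ∫⁻ x in B, f x ∂ν := by
        simp [setLIntegral_compProd_comp_fst κ hf hB MeasurableSet.univ]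

end CompProd

theorem boundary_weighted_integrability_general
    {X : Type*} [MeasurableSpace X]
    (κ : Kernel X X) [IsMarkovKernel κ]
    (ν : Measure X) [SigmaFinite ν]
    (hrev : (ν ⊗ₘ κ).map Prod.swap = ν ⊗ₘ κ)
    (Ω : Set X) (hΩ : MeasurableSet Ω)
    (p c : ℝ) (hp : 1 < p) (hc : 0 < c)
    (a : X → X → ℝ → ℝ)
    (hcoer : ∀ x y : X, ∀ r : ℝ, c * |r| ^ (p - 1) ≤ |a x y r|)
    (u : X → ℝ) (hum : Measurable u)
    (huL : ∫⁻ x in Ω, ENNReal.ofReal (|u x| ^ (p - 1)) ∂ν ≠ ⊤)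
    (hker : ∫⁻ z in Q2set κ Ω,
        ENNReal.ofReal |a z.1 z.2 (u z.2 - u z.1)| ∂(ν ⊗ₘ κ) ≠ ⊤) :
    ∫⁻ x in mBoundary κ Ω, κ x Ω * ENNReal.ofReal (|u x| ^ (p - 1)) ∂ν < ⊤ := by
  have hq : 0 ≤ p - 1 := by linarith
  have hweight : Measurable fun x => ENNReal.ofReal (|u x| ^ (p - 1)) := by fun_prop
  have hdiff : ∫⁻ z in mBoundary κ Ω ×ˢ Ω, ENNReal.ofReal (|u z.2 - u z.1| ^ (p - 1))
      ∂(ν ⊗ₘ κ) < ⊤ := calc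
    _ ≤ ∫⁻ z in Q2set κ Ω, ENNReal.ofReal c⁻¹ * ENNReal.ofReal |a z.1 z.2 (u z.2 - u z.1)|
          ∂(ν ⊗ₘ κ) := by
        refine (lintegral_mono fun z => ?_).trans
          (lintegral_mono_set (mBoundary_prod_subset_Q2set κ Ω))
        rw [← ENNReal.ofReal_mul (by positivity)]
        exact ENNReal.ofReal_le_ofReal ((le_inv_mul_iff₀ hc).2 (hcoer _ _ _))
    _ < ⊤ := by
        rw [lintegral_const_mul' _ _ ofReal_ne_top]
        exact mul_lt_top ofReal_lt_top hker.lt_top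
  have hΩpart : ∫⁻ z in mBoundary κ Ω ×ˢ Ω, ENNReal.ofReal (|u z.2| ^ (p - 1)) ∂(ν ⊗ₘ κ) < ⊤ :=
    (setLIntegral_compProd_comp_snd_le_of_map_swap κ hrev hweight _ hΩ).trans_lt huL.lt_top
  rw [← setLIntegral_compProd_comp_fst κ hweight (measurableSet_mBoundary κ hΩ) hΩ]
  calc _ ≤ ∫⁻ z in mBoundary κ Ω ×ˢ Ω, 2 ^ (p - 1) * (ENNReal.ofReal (|u z.2 - u z.1| ^ (p - 1))
          + ENNReal.ofReal (|u z.2| ^ (p - 1))) ∂(ν ⊗ₘ κ) :=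
        lintegral_mono fun z => ofReal_abs_rpow_le_two_rpow_mul hq _ _
    _ < ⊤ := by
        rw [lintegral_const_mul' _ _ (rpow_ne_top_of_nonneg hq ofNat_ne_top),
          lintegral_add_right' _ (by fun_prop : Measurable fun z : X × X =>
            ENNReal.ofReal (|u z.2| ^ (p - 1))).aemeasurable]
        exact mul_lt_top (rpow_lt_top_of_nonneg hq ofNat_ne_top) (add_lt_top.2 ⟨hdiff, hΩpart⟩)

/-- If `u|_Ω ∈ L^{p-1}(Ω,ν)`, the kernel
`(x,y) ↦ a_p(x,y,u(y)-u(x))` is in `L¹(Q₂, ν ⊗ₘ κ)` and `c|r|^{p-1} ≤ |a_p(x,y,r)|`,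
then `m_·(Ω)|u|^{p-1} ∈ L¹(∂_mΩ,ν)`, i.e.
`∫_{∂_mΩ} m_x(Ω) |u(x)|^{p-1} dν(x) < +∞`. -/
theorem boundary_weighted_integrability
    {X : Type*} [MeasurableSpace X]
    (κ : Kernel X X) [IsMarkovKernel κ]
    (ν : Measure X) [SigmaFinite ν]
    (habs : ∀ x, κ x ≪ ν)
    (hrev : (ν ⊗ₘ κ).map Prod.swap = ν ⊗ₘ κ)
    (Ω : Set X) (hΩ : MeasurableSet Ω)
    (hfin : ν (mClosure κ Ω) < ⊤)
    (p c : ℝ) (hp : 1 < p) (hc : 0 < c)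
    (a : X → X → ℝ → ℝ)
    (ham : Measurable (fun z : (X × X) × ℝ => a z.1.1 z.1.2 z.2))
    (hcoer : ∀ x y : X, ∀ r : ℝ, c * |r| ^ (p - 1) ≤ |a x y r|)
    (u : X → ℝ) (hum : Measurable u)
    (huL : ∫⁻ x in Ω, ENNReal.ofReal (|u x| ^ (p - 1)) ∂ν ≠ ⊤)
    (hker : ∫⁻ z in Q2set κ Ω,
        ENNReal.ofReal |a z.1 z.2 (u z.2 - u z.1)| ∂(ν ⊗ₘ κ) ≠ ⊤) :
    ∫⁻ x in mBoundary κ Ω, κ x Ω * ENNReal.ofReal (|u x| ^ (p - 1)) ∂ν < ⊤ :=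
  boundary_weighted_integrability_general κ ν hrev Ω hΩ p c hp hc a hcoer u hum huL hker
end
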